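/- arXiv:1904.02645 — 4 statements merged into one kernel-verified Lean document; each statement's English description precedes it below -/
import Mathlib

section
/- Let X be a Peano continuum and let g : S¹ → X be a continuous surjection which is strongly irreducible, i.e., g(A) ≠ X for every closed proper subset A ⊊ S¹. Then g is edge-wise Eulerian: for every free arc e of X and every point x ∈ e, the preimage g⁻¹({x}) is a singleton. -/
open Topology Set Filter

/-- A free arc of `X`: an open subset homeomorphic to `(0,1)`, maximal under inclusion
among open subsets homeomorphic to `(0,1)`. -/
def IsFreeArc {X : Type*} [TopologicalSpace X] (e : Set X) : Prop :=
  IsOpen e ∧ Nonempty (e ≃ₜ Set.Ioo (0:ℝ) 1) ∧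
    ∀ e' : Set X, IsOpen e' → Nonempty (e' ≃ₜ Set.Ioo (0:ℝ) 1) → e ⊆ e' → e' = e

/-- The ground space of `X`: the complement of the union of all free arcs. -/
def ground (X : Type*) [TopologicalSpace X] : Set X :=
  {x : X | ∀ e : Set X, IsFreeArc e → x ∉ e}

/-- The edge cut determined by a partition `(A, B)` of the ground space. -/
def edgeCut {X : Type*} [TopologicalSpace X] (A B : Set X) : Set (Set X) :=
  {e : Set X | IsFreeArc e ∧ (closure e ∩ A).Nonempty ∧ (closure e ∩ B).Nonempty}

/-- `X` satisfies the even-cut condition: every edge cut is finite of even cardinality. -/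
def EvenCutCondition (X : Type*) [TopologicalSpace X] : Prop :=
  ∀ A B : Set X, IsClosed A → IsClosed B → A.Nonempty → B.Nonempty → Disjoint A B →
    A ∪ B = ground X → (edgeCut A B).Finite ∧ Even (edgeCut A B).ncard

/-- A continuous surjection onto `X` is edge-wise Eulerian if the preimage of every
interior point of every free arc is a singleton. -/
def EdgewiseEulerian {D X : Type*} [TopologicalSpace X] (g : D → X) : Prop :=
  ∀ e : Set X, IsFreeArc e → ∀ x ∈ e, ∃ t : D, g ⁻¹' {x} = {t}

/-- Strongly irreducible: no proper closed subset of the domain maps onto everything. -/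
def StronglyIrreducible {D X : Type*} [TopologicalSpace D] (g : D → X) : Prop :=
  ∀ A : Set D, IsClosed A → A ≠ Set.univ → g '' A ≠ Set.univ

/-- An arc: a subspace homeomorphic to `[0,1]`. -/
def IsArc {D : Type*} [TopologicalSpace D] (A : Set D) : Prop :=
  Nonempty (A ≃ₜ Set.Icc (0:ℝ) 1)

/-- A subcontinuum: a nonempty closed connected subset. -/
def IsSubcontinuum {D : Type*} [TopologicalSpace D] (A : Set D) : Prop :=
  IsClosed A ∧ IsConnected A

/-- Arcwise increasing: images of strictly nested arcs are strictly nested. -/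
def ArcwiseIncreasing {D X : Type*} [TopologicalSpace D] (g : D → X) : Prop :=
  ∀ A B : Set D, IsArc A → IsArc B → A ⊂ B → g '' A ⊂ g '' B

/-- Hereditarily irreducible: images of strictly nested subcontinua are strictly nested. -/
def HereditarilyIrreducible {D X : Type*} [TopologicalSpace D] (g : D → X) : Prop :=
  ∀ A B : Set D, IsSubcontinuum A → IsSubcontinuum B → A ⊂ B → g '' A ⊂ g '' B

/-- Irreducible: no proper subcontinuum of the domain maps onto everything. -/
def IrreducibleMap {D X : Type*} [TopologicalSpace D] (g : D → X) : Prop :=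
  ∀ K : Set D, IsSubcontinuum K → K ≠ Set.univ → g '' K ≠ Set.univ

/-- Almost injective: the points of injectivity are dense in the domain. -/
def AlmostInjective {D X : Type*} [TopologicalSpace D] (g : D → X) : Prop :=
  Dense {x : D | ∀ y : D, g y = g x → y = x}


namespace Stmt0Aux
open Real

noncomputable section

lemma min_le_pi (d : ℝ) : min d (2*π - d) ≤ π := by
  rcases le_total d π with h|h
  · exact le_trans (min_le_left _ _) h
  · exact le_trans (min_le_right _ _) (by linarith)

lemma arith1 (d ε : ℝ) (hd0 : 0 < d) (hd2 : d < 2*π) (hε1 : ε ≤ d) (hε2 : ε ≤ 2*π - d)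
    (k : ℤ) : ¬ |d + 2*π*k| < ε := by
  intro h
  rw [abs_lt] at h
  obtain ⟨ha, hb⟩ := h
  have hπ := Real.pi_pos
  rcases lt_trichotomy k 0 with hk|hk|hk
  · have hk1 : (k:ℝ) ≤ -1 := by exact_mod_cast (by omega : k ≤ -1)
    nlinarith
  · subst hk; push_cast at ha hb; linarith
  · have hk1 : (1:ℝ) ≤ (k:ℝ) := by exact_mod_cast (by omega : 1 ≤ k)
    nlinarith

lemma arith0 (ε : ℝ) (hε : ε ≤ 2*π) (k : ℤ) (hk : k ≠ 0) : ¬ |2*π*k| < ε := by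
  intro h
  rw [abs_lt] at h
  obtain ⟨ha, hb⟩ := h
  have hπ := Real.pi_pos
  rcases lt_trichotomy k 0 with hkk|hkk|hkk
  · have hk1 : (k:ℝ) ≤ -1 := by exact_mod_cast (by omega : k ≤ -1)
    nlinarith
  · exact hk hkk
  · have hk1 : (1:ℝ) ≤ (k:ℝ) := by exact_mod_cast (by omega : 1 ≤ k)
    nlinarith

lemma abs_lt_of_mem_uIcc {t s r δ : ℝ} (hs : |s - t| < δ) (hr : r ∈ Set.uIcc t s) :
    |r - t| < δ := by
  rw [abs_sub_lt_iff] at hs ⊢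
  rcases Set.mem_uIcc.mp hr with ⟨h1, h2⟩ | ⟨h1, h2⟩ <;>
    exact ⟨by linarith, by linarith⟩

lemma sides_disjoint (t η ρ : ℝ) (hη : η ≤ π) (k : ℤ)
    (h1 : ρ ∈ Set.Ioo (t - η) t) (h2 : ρ - 2*π*k ∈ Set.Ioo t (t + η)) : False := by
  obtain ⟨h1a, h1b⟩ := h1
  obtain ⟨h2a, h2b⟩ := h2
  rcases eq_or_ne k 0 with rfl | hk
  · push_cast at h2a h2b; linarith
  · refine arith0 (2*η) (by linarith) k hk ?_
    rw [abs_lt]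
    constructor <;> nlinarith

lemma expk (r : ℝ) (k : ℤ) : Circle.exp (r - 2*π*k) = Circle.exp r :=
  Circle.exp_eq_exp.mpr ⟨-k, by push_cast; ring⟩

lemma normalize (a b r : ℝ) (hab : a < b) (hlen : b - a < 2*π)
    (h : ∀ sA ∈ Set.Icc b (a + 2*π), Circle.exp sA ≠ Circle.exp r) :
    ∃ k : ℤ, r - 2*π*k ∈ Set.Ioo a b := by
  have hπ := Real.pi_pos
  have hp : (0:ℝ) < 2*π := by positivity
  set k := ⌊(r - b)/(2*π)⌋ with hk
  have h1 : (k:ℝ)*(2*π) ≤ r - b := (le_div_iff₀ hp).mp (Int.floor_le _)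
  have h2 : r - b < ((k:ℝ)+1)*(2*π) := by
    rw [← div_lt_iff₀ hp]
    have := Int.lt_floor_add_one ((r - b)/(2*π))
    push_cast at this ⊢
    linarith
  by_cases hc : r - 2*π*k ≤ a + 2*π
  · exact absurd (expk r k) (h (r - 2*π*k) ⟨by nlinarith, hc⟩)
  · push_neg at hc
    refine ⟨k+1, ?_⟩
    push_cast
    constructor <;> nlinarith


structure Ctx where
  F : ℝ → ℝ
  c : ℝ
  hc : c ∈ Set.Ioo (0:ℝ) 1
  hS : IsOpen (F ⁻¹' Set.Ioo (0:ℝ) 1)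
  hcont : ContinuousOn F (F ⁻¹' Set.Ioo (0:ℝ) 1)
  hper : ∀ r, F (r + 2*π) = F r
  hstar : ∀ a b : ℝ, a < b → b - a < 2*π → Set.Ioo a b ⊆ F ⁻¹' Set.Ioo (0:ℝ) 1 →
    ∃ v, v ∈ Set.Ioo (0:ℝ) 1 ∧ (∃ r, r ∈ Set.Ioo a b ∧ F r = v) ∧
      ∀ r, F r = v → ∃ k : ℤ, r - 2*π*k ∈ Set.Ioo a b

namespace Ctx

variable (P : Ctx)

lemma perk (k : ℤ) (r : ℝ) : P.F (r + 2*π*k) = P.F r := by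
  have hp : Function.Periodic P.F (2*π) := P.hper
  have := (hp.int_mul k) r
  rw [mul_comm (2*π) ((k:ℤ):ℝ)]
  exact this

lemma perk' (k : ℤ) (r : ℝ) : P.F (r - 2*π*k) = P.F r := by
  have := P.perk k (r - 2*π*k)
  rw [sub_add_cancel] at this
  exact this.symm

/-- `v` is a value near `c` whose whole fiber is within `δ` of `t` (mod `2π`). -/
def Excl (v t δ : ℝ) : Prop :=
  (∃ r, |r - t| < δ ∧ P.F r = v) ∧ ∀ r, P.F r = v → ∃ k : ℤ, |r - t - 2*π*k| < δ

def UA (t : ℝ) : Prop := ∀ δ > 0, ∃ v, P.c < v ∧ v < P.c + δ ∧ P.Excl v t δ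

def LA (t : ℝ) : Prop := ∀ δ > 0, ∃ v, P.c - δ < v ∧ v < P.c ∧ P.Excl v t δ

lemma Excl_shift {v t δ : ℝ} (k : ℤ) (h : P.Excl v t δ) : P.Excl v (t + 2*π*k) δ := by
  obtain ⟨⟨r, hr, hrv⟩, hfib⟩ := h
  constructor
  · refine ⟨r + 2*π*k, ?_, by rw [P.perk]; exact hrv⟩
    rw [show r + 2*π*k - (t + 2*π*k) = r - t by ring]
    exact hr
  · intro r hr
    obtain ⟨k', hk'⟩ := hfib r hr
    refine ⟨k' - k, ?_⟩
    rw [show r - (t + 2*π*k) - 2*π*((k' - k : ℤ):ℝ) = r - t - 2*π*k' by push_cast; ring]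
    exact hk'

lemma UA_shift {t : ℝ} (k : ℤ) (h : P.UA t) : P.UA (t + 2*π*k) := by
  intro δ hδ
  obtain ⟨v, h1, h2, h3⟩ := h δ hδ
  exact ⟨v, h1, h2, P.Excl_shift k h3⟩

lemma LA_shift {t : ℝ} (k : ℤ) (h : P.LA t) : P.LA (t + 2*π*k) := by
  intro δ hδ
  obtain ⟨v, h1, h2, h3⟩ := h δ hδ
  exact ⟨v, h1, h2, P.Excl_shift k h3⟩

lemma vflip_set : (fun r => 1 - P.F r) ⁻¹' Set.Ioo (0:ℝ) 1 = P.F ⁻¹' Set.Ioo (0:ℝ) 1 := by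
  ext r
  simp only [Set.mem_preimage, Set.mem_Ioo]
  constructor <;> rintro ⟨h1, h2⟩ <;> exact ⟨by linarith, by linarith⟩

def vflip : Ctx where
  F := fun r => 1 - P.F r
  c := 1 - P.c
  hc := ⟨by linarith [P.hc.2], by linarith [P.hc.1]⟩
  hS := by rw [P.vflip_set]; exact P.hS
  hcont := by
    rw [P.vflip_set]
    exact continuousOn_const.sub P.hcont
  hper := fun r => by show 1 - P.F (r + 2*π) = 1 - P.F r; rw [P.hper]
  hstar := by
    intro a b hab hlen hsub
    rw [P.vflip_set] at hsub
    obtain ⟨v, hv, ⟨r0, hr0, hr0v⟩, hfib⟩ := P.hstar a b hab hlen hsub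
    refine ⟨1 - v, ⟨by linarith [hv.2], by linarith [hv.1]⟩,
      ⟨r0, hr0, by show 1 - P.F r0 = 1 - v; rw [hr0v]⟩,
      fun r hr => hfib r (by have hr2 : 1 - P.F r = 1 - v := hr; linarith)⟩

lemma UA_vflip {t : ℝ} (h : P.LA t) : P.vflip.UA t := by
  intro δ hδ
  obtain ⟨v, h1, h2, ⟨r, hr, hrv⟩, hfib⟩ := h δ hδ
  refine ⟨1 - v, by show 1 - P.c < 1 - v; linarith, by show 1 - v < 1 - P.c + δ; linarith,
    ⟨r, hr, by show 1 - P.F r = 1 - v; rw [hrv]⟩, ?_⟩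
  intro r' hr'
  exact hfib r' (by have : 1 - P.F r' = 1 - v := hr'; linarith)

def sflip : Ctx where
  F := fun r => P.F (-r)
  c := P.c
  hc := P.hc
  hS := by
    have : (fun r => P.F (-r)) ⁻¹' Set.Ioo (0:ℝ) 1 = (fun r : ℝ => -r) ⁻¹' (P.F ⁻¹' Set.Ioo (0:ℝ) 1) := rfl
    rw [this]
    exact P.hS.preimage continuous_neg
  hcont := ContinuousOn.comp P.hcont continuous_neg.continuousOn (fun r hr => hr)
  hper := fun r => by
    have h := P.hper (-r - 2*π)
    rw [show -r - 2*π + 2*π = -r by ring] at h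
    show P.F (-(r + 2*π)) = P.F (-r)
    rw [show -(r + 2*π) = -r - 2*π by ring]
    exact h.symm
  hstar := by
    intro a b hab hlen hsub
    obtain ⟨v, hv, ⟨r0, hr0, hr0v⟩, hfib⟩ := P.hstar (-b) (-a) (by linarith) (by linarith)
      (by intro r hr
          have : -r ∈ Set.Ioo a b := ⟨by rcases hr with ⟨h1,h2⟩; linarith, by rcases hr with ⟨h1,h2⟩; linarith⟩
          have := hsub this
          simpa using this)
    refine ⟨v, hv, ⟨-r0, ⟨by rcases hr0 with ⟨h1,h2⟩; linarith, by rcases hr0 with ⟨h1,h2⟩; linarith⟩,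
      by show P.F (-(-r0)) = v; rw [neg_neg]; exact hr0v⟩, ?_⟩
    intro r hr
    obtain ⟨k, hk⟩ := hfib (-r) hr
    refine ⟨-k, ?_⟩
    rcases hk with ⟨h1, h2⟩
    push_cast
    constructor <;> linarith

lemma LA_sflip {t : ℝ} (h : P.LA t) : P.sflip.LA (-t) := by
  intro δ hδ
  obtain ⟨v, h1, h2, ⟨r, hr, hrv⟩, hfib⟩ := h δ hδ
  refine ⟨v, h1, h2, ⟨-r, by rw [show -r - -t = -(r - t) by ring, abs_neg]; exact hr,
    by show P.F (-(-r)) = v; rw [neg_neg]; exact hrv⟩, ?_⟩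
  intro r' hr'
  obtain ⟨k, hk⟩ := hfib (-r') hr'
  refine ⟨-k, ?_⟩
  rw [show r' - -t - 2*π*((-k : ℤ):ℝ) = -(-r' - t - 2*π*(k:ℝ)) by push_cast; ring, abs_neg]
  exact hk

end Ctx

lemma norm_rep (s t : ℝ) : ∃ k : ℤ, s - 2*π*k - t ∈ Set.Ico 0 (2*π) := by
  have hπ := Real.pi_pos
  have hp : (0:ℝ) < 2*π := by positivity
  refine ⟨⌊(s - t)/(2*π)⌋, ?_⟩
  have h1 : (⌊(s - t)/(2*π)⌋:ℝ)*(2*π) ≤ s - t := (le_div_iff₀ hp).mp (Int.floor_le _)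
  have h2 : (s - t)/(2*π) < (⌊(s - t)/(2*π)⌋:ℝ) + 1 := by
    have := Int.lt_floor_add_one ((s - t)/(2*π))
    push_cast at this ⊢; linarith
  rw [div_lt_iff₀ hp] at h2
  constructor
  · nlinarith
  · nlinarith

lemma abs_helper {x d a b : ℝ} (k : ℤ) (hx : |x| < a) (hy : |x - d - 2*π*(k:ℝ)| < b) :
    |d + 2*π*(k:ℝ)| < a + b := by
  rw [show d + 2*π*(k:ℝ) = x - (x - d - 2*π*(k:ℝ)) by ring, sub_eq_add_neg]
  calc |x + -(x - d - 2*π*(k:ℝ))| ≤ |x| + |-(x - d - 2*π*(k:ℝ))| := abs_add_le _ _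
  _ = |x| + |x - d - 2*π*(k:ℝ)| := by rw [abs_neg]
  _ < a + b := by linarith

namespace Ctx

variable (P : Ctx)

lemma step1 (t t' : ℝ) (ht : P.F t = P.c) (ht' : P.F t' = P.c)
    (hd : t' - t ∈ Set.Ioo 0 (2*π)) : P.UA t ∨ P.LA t := by
  by_cases hUA : P.UA t
  · exact Or.inl hUA
  right
  rw [UA] at hUA; push_neg at hUA
  obtain ⟨δ₀, hδ₀, h₀⟩ := hUA
  intro δ hδ
  obtain ⟨hd0, hd2⟩ := hd
  have hπ := Real.pi_pos
  have htS : t ∈ P.F ⁻¹' Set.Ioo (0:ℝ) 1 := by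
    simp only [Set.mem_preimage, ht]; exact P.hc
  have hca : ContinuousAt P.F t := P.hcont.continuousAt (P.hS.mem_nhds htS)
  set ε := min δ δ₀ with hεdef
  have hεpos : 0 < ε := lt_min hδ hδ₀
  have hεδ : ε ≤ δ := min_le_left _ _
  have hεδ₀ : ε ≤ δ₀ := min_le_right _ _
  obtain ⟨ρ₀, hρ₀, hρ₀c⟩ := Metric.continuousAt_iff.mp hca ε hεpos
  obtain ⟨ρ₁, hρ₁, hball⟩ := Metric.isOpen_iff.mp P.hS t htS
  set m := min (t' - t) (2*π - (t' - t)) with hm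
  have hm0 : 0 < m := lt_min hd0 (by linarith)
  have hm1 : m ≤ t' - t := min_le_left _ _
  have hm2 : m ≤ 2*π - (t' - t) := min_le_right _ _
  have hmπ : m ≤ π := min_le_pi _
  set ρ := min (min ρ₀ ρ₁) (min (m/2) ε) with hρdef
  have hρpos : 0 < ρ := lt_min (lt_min hρ₀ hρ₁) (lt_min (by linarith) hεpos)
  have hρρ₀ : ρ ≤ ρ₀ := le_trans (min_le_left _ _) (min_le_left _ _)
  have hρρ₁ : ρ ≤ ρ₁ := le_trans (min_le_left _ _) (min_le_right _ _)
  have hρm : ρ ≤ m/2 := le_trans (min_le_right _ _) (min_le_left _ _)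
  have hρε : ρ ≤ ε := le_trans (min_le_right _ _) (min_le_right _ _)
  have hsub : Set.Ioo (t - ρ) (t + ρ) ⊆ P.F ⁻¹' Set.Ioo (0:ℝ) 1 := by
    intro r hr
    apply hball
    rw [Metric.mem_ball, Real.dist_eq, abs_sub_lt_iff]
    exact ⟨by linarith [hr.2], by linarith [hr.1]⟩
  obtain ⟨v, hv01, ⟨r₀, hr₀, hr₀v⟩, hfib⟩ := P.hstar (t - ρ) (t + ρ) (by linarith)
    (by linarith) hsub
  have hr₀t : |r₀ - t| < ρ := by
    rw [abs_sub_lt_iff]; exact ⟨by linarith [hr₀.2], by linarith [hr₀.1]⟩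
  have hvc : |v - P.c| < ε := by
    have h5 := hρ₀c (show dist r₀ t < ρ₀ by rw [Real.dist_eq]; linarith)
    rw [Real.dist_eq, hr₀v, ht] at h5
    exact h5
  have hvc' := abs_lt.mp hvc
  have hfib' : ∀ r, P.F r = v → ∃ k : ℤ, |r - t - 2*π*(k:ℝ)| < ρ := by
    intro r hr
    obtain ⟨k, hk⟩ := hfib r hr
    refine ⟨k, ?_⟩
    rw [show r - t - 2*π*(k:ℝ) = (r - 2*π*k) - t by ring, abs_sub_lt_iff]
    exact ⟨by linarith [hk.2], by linarith [hk.1]⟩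
  have hvne : v ≠ P.c := by
    intro hveq
    obtain ⟨k, hk⟩ := hfib' t' (by rw [ht', hveq])
    refine arith1 (t' - t) ρ hd0 hd2 (by linarith) (by linarith) (-k) ?_
    have hcast : ((-k : ℤ):ℝ) = -(k:ℝ) := by push_cast; ring
    rw [hcast, show (t' - t) + 2*π*(-(k:ℝ)) = t' - t - 2*π*(k:ℝ) by ring]
    exact hk
  rcases lt_or_gt_of_ne hvne with hlt | hgt
  · refine ⟨v, by linarith [hvc'.1], hlt, ⟨r₀, by linarith, hr₀v⟩, ?_⟩
    intro r hr
    obtain ⟨k, hk⟩ := hfib' r hr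
    exact ⟨k, by linarith⟩
  · exfalso
    apply h₀ v hgt (by linarith [hvc'.2])
    refine ⟨⟨r₀, by linarith, hr₀v⟩, ?_⟩
    intro r hr
    obtain ⟨k, hk⟩ := hfib' r hr
    exact ⟨k, by linarith⟩

lemma step2 (t t' : ℝ) (ht : P.F t = P.c) (hd : t' - t ∈ Set.Ioo 0 (2*π))
    (hU : P.UA t) (hU' : P.UA t') : False := by
  obtain ⟨hd0, hd2⟩ := hd
  have hπ := Real.pi_pos
  set m := min (t' - t) (2*π - (t' - t)) with hm
  have hm0 : 0 < m := lt_min hd0 (by linarith)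
  have hm1 : m ≤ t' - t := min_le_left _ _
  have hm2 : m ≤ 2*π - (t' - t) := min_le_right _ _
  have htS : t ∈ P.F ⁻¹' Set.Ioo (0:ℝ) 1 := by
    simp only [Set.mem_preimage, ht]; exact P.hc
  obtain ⟨ρ₁, hρ₁, hball⟩ := Metric.isOpen_iff.mp P.hS t htS
  set δ := min (m/4) ρ₁ with hδdef
  have hδ0 : 0 < δ := lt_min (by linarith) hρ₁
  have hδm : δ ≤ m/4 := min_le_left _ _
  have hδρ : δ ≤ ρ₁ := min_le_right _ _
  obtain ⟨v, hv1, hv2, ⟨s, hs, hsv⟩, _⟩ := hU δ hδ0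
  set δ' := min (m/4) (v - P.c) with hδ'def
  have hδ'0 : 0 < δ' := lt_min (by linarith) (by linarith)
  have hδ'm : δ' ≤ m/4 := min_le_left _ _
  obtain ⟨u, hu1, hu2, _, hfib⟩ := hU' δ' hδ'0
  have huv : u < v := by
    have h5 : δ' ≤ v - P.c := min_le_right _ _
    linarith
  have hsegball : Set.uIcc t s ⊆ Metric.ball t ρ₁ := by
    intro r hr
    rw [Metric.mem_ball, Real.dist_eq]
    exact lt_of_lt_of_le (abs_lt_of_mem_uIcc hs hr) hδρ
  have hcseg : ContinuousOn P.F (Set.uIcc t s) := P.hcont.mono (hsegball.trans hball)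
  have hmem : u ∈ Set.uIcc (P.F t) (P.F s) := by
    rw [ht, hsv, Set.uIcc_of_le (by linarith : P.c ≤ v)]
    exact ⟨le_of_lt hu1, le_of_lt huv⟩
  obtain ⟨r, hrseg, hru⟩ := intermediate_value_uIcc hcseg hmem
  obtain ⟨k, hk⟩ := hfib r hru
  have hrt : |r - t| < δ := abs_lt_of_mem_uIcc hs hrseg
  have habs : |(t' - t) + 2*π*(k:ℝ)| < δ + δ' := by
    refine abs_helper k hrt ?_
    rw [show (r - t) - (t' - t) - 2*π*(k:ℝ) = r - t' - 2*π*(k:ℝ) by ring]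
    exact hk
  exact arith1 (t' - t) (δ + δ') hd0 hd2 (by linarith) (by linarith) k habs

lemma step2' (t t' : ℝ) (ht : P.F t = P.c) (hd : t' - t ∈ Set.Ioo 0 (2*π))
    (hL : P.LA t) (hL' : P.LA t') : False :=
  P.vflip.step2 t t' (by show 1 - P.F t = 1 - P.c; rw [ht]) hd (P.UA_vflip hL) (P.UA_vflip hL')

lemma step4 (t t' η : ℝ) (ht : P.F t = P.c) (hd : t' - t ∈ Set.Ioo 0 (2*π)) (hL' : P.LA t')
    (hη0 : 0 < η) (hηm : η ≤ min (t' - t) (2*π - (t' - t)) / 4)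
    (hball : Metric.ball t η ⊆ P.F ⁻¹' Set.Ioo (0:ℝ) 1)
    (hne : ∀ r ∈ Set.Ioo t (t + η), P.F r ≠ P.c) :
    ∀ r ∈ Set.Ioo t (t + η), P.c < P.F r := by
  intro r hr
  rcases lt_or_gt_of_ne (hne r hr) with hFr | hFr
  swap
  · exact hFr
  exfalso
  obtain ⟨hd0, hd2⟩ := hd
  have hπ := Real.pi_pos
  set m := min (t' - t) (2*π - (t' - t)) with hm
  have hm0 : 0 < m := lt_min hd0 (by linarith)
  have hm1 : m ≤ t' - t := min_le_left _ _
  have hm2 : m ≤ 2*π - (t' - t) := min_le_right _ _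
  set δ' := min (m/4) (P.c - P.F r) with hδ'def
  have hδ'0 : 0 < δ' := lt_min (by linarith) (by linarith)
  have hδ'm : δ' ≤ m/4 := min_le_left _ _
  obtain ⟨w, hw1, hw2, _, hfib⟩ := hL' δ' hδ'0
  have hwr : P.F r < w := by
    have h5 : δ' ≤ P.c - P.F r := min_le_right _ _
    linarith
  have hrabs : |r - t| < η := by
    rw [abs_sub_lt_iff]; exact ⟨by linarith [hr.2], by linarith [hr.1]⟩
  have hseg : Set.uIcc t r ⊆ Metric.ball t η := by
    intro ρ hρ
    rw [Metric.mem_ball, Real.dist_eq]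
    exact abs_lt_of_mem_uIcc hrabs hρ
  have hcseg : ContinuousOn P.F (Set.uIcc t r) := P.hcont.mono (hseg.trans hball)
  have hmem : w ∈ Set.uIcc (P.F t) (P.F r) := by
    rw [ht, Set.uIcc_of_ge (le_of_lt hFr)]
    exact ⟨le_of_lt hwr, le_of_lt hw2⟩
  obtain ⟨ρ, hρseg, hρw⟩ := intermediate_value_uIcc hcseg hmem
  obtain ⟨k, hk⟩ := hfib ρ hρw
  have hρt : |ρ - t| < η := abs_lt_of_mem_uIcc hrabs hρseg
  have habs : |(t' - t) + 2*π*(k:ℝ)| < η + δ' := by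
    refine abs_helper k hρt ?_
    rw [show (ρ - t) - (t' - t) - 2*π*(k:ℝ) = ρ - t' - 2*π*(k:ℝ) by ring]
    exact hk
  exact arith1 (t' - t) (η + δ') hd0 hd2 (by linarith) (by linarith) k habs

end Ctx

namespace Ctx

variable (P : Ctx)

lemma main (t₁ t₂ : ℝ) (h1 : P.F t₁ = P.c) (h2 : P.F t₂ = P.c)
    (hd : t₂ - t₁ ∈ Set.Ioo 0 (2*π)) (hU1 : P.UA t₁) (hL2 : P.LA t₂) : False := by
  obtain ⟨hd0, hd2⟩ := hd
  have hπ := Real.pi_pos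
  have htwo : ∀ s, P.F s = P.c → (∃ k : ℤ, s = t₁ + 2*π*k) ∨ (∃ k : ℤ, s = t₂ + 2*π*k) := by
    intro s hs
    by_contra hcon
    push_neg at hcon
    obtain ⟨hc1, hc2⟩ := hcon
    obtain ⟨k₁, hk₁⟩ := norm_rep s t₁
    obtain ⟨k₂, hk₂⟩ := norm_rep s t₂
    have hne₁ : s - 2*π*k₁ - t₁ ≠ 0 := fun h0 => hc1 k₁ (by linarith)
    have hne₂ : s - 2*π*k₂ - t₂ ≠ 0 := fun h0 => hc2 k₂ (by linarith)
    have hs₁ : P.F (s - 2*π*k₁) = P.c := by rw [P.perk']; exact hs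
    have hs₂ : P.F (s - 2*π*k₂) = P.c := by rw [P.perk']; exact hs
    have hmem₁ : s - 2*π*k₁ - t₁ ∈ Set.Ioo 0 (2*π) :=
      ⟨lt_of_le_of_ne hk₁.1 (Ne.symm hne₁), hk₁.2⟩
    have hmem₂ : s - 2*π*k₂ - t₂ ∈ Set.Ioo 0 (2*π) :=
      ⟨lt_of_le_of_ne hk₂.1 (Ne.symm hne₂), hk₂.2⟩
    have hF2π : P.F (t₁ + 2*π) = P.c := by rw [P.hper t₁]; exact h1
    have hdiff : (t₁ + 2*π) - (s - 2*π*k₁) ∈ Set.Ioo 0 (2*π) :=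
      ⟨by linarith [hmem₁.2], by linarith [hmem₁.1]⟩
    rcases P.step1 (s - 2*π*k₁) (t₁ + 2*π) hs₁ hF2π hdiff with hUs | hLs
    · exact P.step2 t₁ (s - 2*π*k₁) h1 hmem₁ hU1 hUs
    · have hshift : P.LA (s - 2*π*k₂) := by
        have hh := P.LA_shift (k₁ - k₂) hLs
        rw [show (s - 2*π*(k₁:ℝ)) + 2*π*((k₁ - k₂ : ℤ):ℝ) = s - 2*π*(k₂:ℝ) by
          push_cast; ring] at hh
        exact hh
      exact P.step2' t₂ (s - 2*π*k₂) h2 hmem₂ hL2 hshift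
  set m := min (t₂ - t₁) (2*π - (t₂ - t₁)) with hm
  have hm0 : 0 < m := lt_min hd0 (by linarith)
  have hmπ : m ≤ π := min_le_pi _
  have hiso : ∀ r, P.F r = P.c → |r - t₁| < m → r = t₁ := by
    intro r hrc hrm
    rcases htwo r hrc with ⟨k, hk⟩ | ⟨k, hk⟩
    · rcases eq_or_ne k 0 with rfl | hk0
      · rw [hk]; push_cast; ring
      · exfalso
        refine arith0 m (by linarith) k hk0 ?_
        rw [← show r - t₁ = 2*π*(k:ℝ) by rw [hk]; ring]
        exact hrm
    · exfalso
      refine arith1 (t₂ - t₁) m hd0 hd2 (min_le_left _ _) (min_le_right _ _) k ?_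
      rw [← show r - t₁ = (t₂ - t₁) + 2*π*(k:ℝ) by rw [hk]; ring]
      exact hrm
  have ht₁S : t₁ ∈ P.F ⁻¹' Set.Ioo (0:ℝ) 1 := by
    simp only [Set.mem_preimage, h1]; exact P.hc
  obtain ⟨ρ₁, hρ₁, hball⟩ := Metric.isOpen_iff.mp P.hS t₁ ht₁S
  set η := min ρ₁ (m/4) with hηdef
  have hη0 : 0 < η := lt_min hρ₁ (by linarith)
  have hηρ : η ≤ ρ₁ := min_le_left _ _
  have hηm : η ≤ m/4 := min_le_right _ _
  have hηπ : η ≤ π := by linarith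
  have hballη : Metric.ball t₁ η ⊆ P.F ⁻¹' Set.Ioo (0:ℝ) 1 :=
    (Metric.ball_subset_ball hηρ).trans hball
  have hneR : ∀ r ∈ Set.Ioo t₁ (t₁ + η), P.F r ≠ P.c := by
    intro r hr hc
    have h5 : r = t₁ := hiso r hc (by
      rw [abs_sub_lt_iff]
      exact ⟨by linarith [hr.2], by linarith [hr.1]⟩)
    rw [h5] at hr
    exact absurd hr.1 (lt_irrefl t₁)
  have hright := P.step4 t₁ t₂ η h1 ⟨hd0, hd2⟩ hL2 hη0 (by rw [← hm]; exact hηm) hballη hneR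
  have hleft : ∀ r ∈ Set.Ioo (t₁ - η) t₁, P.c < P.F r := by
    have hQt : P.sflip.F (-t₁) = P.sflip.c := by
      show P.F (-(-t₁)) = P.c; rw [neg_neg]; exact h1
    have hL' : P.sflip.LA (-t₂ + 2*π) := by
      have hh := P.sflip.LA_shift 1 (P.LA_sflip hL2)
      rw [show -t₂ + 2*π*((1:ℤ):ℝ) = -t₂ + 2*π by push_cast; ring] at hh
      exact hh
    have hd' : (-t₂ + 2*π) - (-t₁) ∈ Set.Ioo 0 (2*π) := ⟨by linarith, by linarith⟩
    have hη' : η ≤ min ((-t₂ + 2*π) - (-t₁)) (2*π - ((-t₂ + 2*π) - (-t₁))) / 4 := by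
      rw [show (-t₂ + 2*π) - (-t₁) = 2*π - (t₂ - t₁) by ring,
        show 2*π - (2*π - (t₂ - t₁)) = t₂ - t₁ by ring, min_comm, ← hm]
      exact hηm
    have hballQ : Metric.ball (-t₁) η ⊆ P.sflip.F ⁻¹' Set.Ioo (0:ℝ) 1 := by
      intro r hr
      have h6 : -r ∈ Metric.ball t₁ η := by
        rw [Metric.mem_ball, Real.dist_eq] at hr ⊢
        rw [show -r - t₁ = -(r - -t₁) by ring, abs_neg]
        exact hr
      exact hballη h6
    have hneQ : ∀ r ∈ Set.Ioo (-t₁) (-t₁ + η), P.sflip.F r ≠ P.sflip.c := by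
      intro r hr hc
      have h5 : P.F (-r) = P.c := hc
      have h6 : -r = t₁ := hiso (-r) h5 (by
        rw [abs_sub_lt_iff]
        exact ⟨by linarith [hr.1], by linarith [hr.2]⟩)
      have h7 : -r < t₁ := by linarith [hr.1]
      rw [h6] at h7
      exact absurd h7 (lt_irrefl t₁)
    have hQ := P.sflip.step4 (-t₁) (-t₂ + 2*π) η hQt hd' hL' hη0 hη' hballQ hneQ
    intro r hr
    have h6 := hQ (-r) ⟨by linarith [hr.2], by linarith [hr.1]⟩
    have h7 : P.sflip.F (-r) = P.F r := by show P.F (-(-r)) = P.F r; rw [neg_neg]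
    rw [h7] at h6
    exact h6
  have hsubR : Set.Ioo t₁ (t₁ + η) ⊆ P.F ⁻¹' Set.Ioo (0:ℝ) 1 := by
    intro r hr
    apply hballη
    rw [Metric.mem_ball, Real.dist_eq, abs_sub_lt_iff]
    exact ⟨by linarith [hr.2], by linarith [hr.1]⟩
  have hsubL : Set.Ioo (t₁ - η) t₁ ⊆ P.F ⁻¹' Set.Ioo (0:ℝ) 1 := by
    intro r hr
    apply hballη
    rw [Metric.mem_ball, Real.dist_eq, abs_sub_lt_iff]
    exact ⟨by linarith [hr.2], by linarith [hr.1]⟩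
  obtain ⟨v, hv01, ⟨rv, hrv, hrvv⟩, hfibv⟩ := P.hstar t₁ (t₁ + η) (by linarith)
    (by linarith) hsubR
  obtain ⟨v', hv'01, ⟨rl, hrl, hrlv⟩, hfibv'⟩ := P.hstar (t₁ - η) t₁ (by linarith)
    (by linarith) hsubL
  have hvc : P.c < v := by rw [← hrvv]; exact hright rv hrv
  have hv'c : P.c < v' := by rw [← hrlv]; exact hleft rl hrl
  rcases lt_trichotomy v v' with hlt | heq | hgt
  · have hseg : Set.uIcc rl t₁ ⊆ Metric.ball t₁ η := by
      rw [Set.uIcc_comm]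
      intro ρ hρ
      rw [Metric.mem_ball, Real.dist_eq]
      refine abs_lt_of_mem_uIcc ?_ hρ
      rw [abs_sub_lt_iff]
      exact ⟨by linarith [hrl.2], by linarith [hrl.1]⟩
    have hcseg : ContinuousOn P.F (Set.uIcc rl t₁) := P.hcont.mono (hseg.trans hballη)
    have hmemv : v ∈ Set.uIcc (P.F rl) (P.F t₁) := by
      rw [hrlv, h1, Set.uIcc_of_ge (by linarith : P.c ≤ v')]
      exact ⟨le_of_lt hvc, le_of_lt hlt⟩
    obtain ⟨ρ, hρseg, hρv⟩ := intermediate_value_uIcc hcseg hmemv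
    have hρIcc : ρ ∈ Set.Icc rl t₁ := by
      rwa [Set.uIcc_of_le (by linarith [hrl.2] : rl ≤ t₁)] at hρseg
    have hρne : ρ ≠ t₁ := by
      intro h0; rw [h0, h1] at hρv; exact absurd hρv.symm (ne_of_gt hvc)
    have hρmem : ρ ∈ Set.Ioo (t₁ - η) t₁ :=
      ⟨by linarith [hρIcc.1, hrl.1], lt_of_le_of_ne hρIcc.2 hρne⟩
    obtain ⟨k, hk⟩ := hfibv ρ hρv
    exact sides_disjoint t₁ η ρ hηπ k hρmem hk
  · obtain ⟨k, hk⟩ := hfibv rl (by rw [hrlv, ← heq])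
    exact sides_disjoint t₁ η rl hηπ k hrl hk
  · have hseg : Set.uIcc rv t₁ ⊆ Metric.ball t₁ η := by
      rw [Set.uIcc_comm]
      intro ρ hρ
      rw [Metric.mem_ball, Real.dist_eq]
      refine abs_lt_of_mem_uIcc ?_ hρ
      rw [abs_sub_lt_iff]
      exact ⟨by linarith [hrv.2], by linarith [hrv.1]⟩
    have hcseg : ContinuousOn P.F (Set.uIcc rv t₁) := P.hcont.mono (hseg.trans hballη)
    have hmemv : v' ∈ Set.uIcc (P.F rv) (P.F t₁) := by
      rw [hrvv, h1, Set.uIcc_of_ge (by linarith : P.c ≤ v)]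
      exact ⟨le_of_lt hv'c, le_of_lt hgt⟩
    obtain ⟨ρ, hρseg, hρv⟩ := intermediate_value_uIcc hcseg hmemv
    have hρIcc : ρ ∈ Set.Icc t₁ rv := by
      rwa [Set.uIcc_of_ge (by linarith [hrv.1] : t₁ ≤ rv)] at hρseg
    have hρne : ρ ≠ t₁ := by
      intro h0; rw [h0, h1] at hρv; exact absurd hρv.symm (ne_of_gt hv'c)
    have hρmem : ρ ∈ Set.Ioo t₁ (t₁ + η) :=
      ⟨lt_of_le_of_ne hρIcc.1 (Ne.symm hρne), by linarith [hρIcc.2, hrv.2]⟩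
    obtain ⟨k, hk⟩ := hfibv' ρ hρv
    refine sides_disjoint t₁ η (ρ - 2*π*(k:ℝ)) hηπ (-k) hk ?_
    rw [show ρ - 2*π*(k:ℝ) - 2*π*((-k : ℤ):ℝ) = ρ by push_cast; ring]
    exact hρmem

theorem core (t₁ t₂ : ℝ) (h1 : P.F t₁ = P.c) (h2 : P.F t₂ = P.c)
    (hd : t₂ - t₁ ∈ Set.Ioo 0 (2*π)) : False := by
  have hπ := Real.pi_pos
  have hF2π : P.F (t₁ + 2*π) = P.c := by rw [P.hper t₁]; exact h1
  have hd' : (t₁ + 2*π) - t₂ ∈ Set.Ioo 0 (2*π) := ⟨by linarith [hd.2], by linarith [hd.1]⟩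
  rcases P.step1 t₁ t₂ h1 h2 hd with hU1 | hL1 <;>
    rcases P.step1 t₂ (t₁ + 2*π) h2 hF2π hd' with hU2 | hL2
  · exact P.step2 t₁ t₂ h1 hd hU1 hU2
  · exact P.main t₁ t₂ h1 h2 hd hU1 hL2
  · exact P.main t₂ (t₁ + 2*π) h2 hF2π hd' hU2 (by
      have hh := P.LA_shift 1 hL1
      rw [show t₁ + 2*π*((1:ℤ):ℝ) = t₁ + 2*π by push_cast; ring] at hh
      exact hh)
  · exact P.step2' t₁ t₂ h1 hd hL1 hL2

end Ctx

section Reduction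

variable {X : Type*} [TopologicalSpace X]

theorem key (g : Circle → X) (hg : Continuous g) (hsurj : Function.Surjective g)
    (hirr : StronglyIrreducible g) (e : Set X) (he_open : IsOpen e)
    (φ : e ≃ₜ Set.Ioo (0:ℝ) 1) (x : X) (hx : x ∈ e)
    (s t₀ : Circle) (hs : g s = x) (ht₀ : g t₀ = x) (hne : s ≠ t₀) : False := by
  classical
  have hπ := Real.pi_pos
  set G : ℝ → X := fun r => g (Circle.exp r) with hG
  have hGcont : Continuous G := hg.comp (map_continuous Circle.exp)
  set F : ℝ → ℝ := fun r => if h : G r ∈ e then ((φ ⟨G r, h⟩ : Set.Ioo (0:ℝ) 1) : ℝ) else 2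
    with hF
  have hFin : ∀ (r : ℝ) (h : G r ∈ e), F r = ((φ ⟨G r, h⟩ : Set.Ioo (0:ℝ) 1) : ℝ) := by
    intro r h; simp only [hF]; exact dif_pos h
  have hFout : ∀ r : ℝ, G r ∉ e → F r = 2 := by
    intro r h; simp only [hF]; exact dif_neg h
  have hval : ∀ r : ℝ, G r ∈ e → F r ∈ Set.Ioo (0:ℝ) 1 := by
    intro r h; rw [hFin r h]; exact (φ ⟨G r, h⟩).2
  have hSeq : F ⁻¹' Set.Ioo (0:ℝ) 1 = G ⁻¹' e := by
    ext r
    simp only [Set.mem_preimage]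
    constructor
    · intro hmem
      by_contra hno
      rw [hFout r hno] at hmem
      exact absurd hmem.2 (by norm_num)
    · exact hval r
  set c : ℝ := ((φ ⟨x, hx⟩ : Set.Ioo (0:ℝ) 1) : ℝ) with hcdef
  have hcIoo : c ∈ Set.Ioo (0:ℝ) 1 := (φ ⟨x, hx⟩).2
  have hFeq : ∀ r r' : ℝ, G r ∈ e → G r' ∈ e → F r = F r' → G r = G r' := by
    intro r r' h h' heq
    rw [hFin r h, hFin r' h'] at heq
    have h2 : φ ⟨G r, h⟩ = φ ⟨G r', h'⟩ := Subtype.ext heq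
    exact congrArg Subtype.val (φ.toEquiv.injective h2)
  have hcF : ∀ r : ℝ, G r = x → F r = c := by
    intro r h
    have hre : G r ∈ e := by rw [h]; exact hx
    rw [hFin r hre]
    have h2 : (⟨G r, hre⟩ : e) = ⟨x, hx⟩ := Subtype.ext h
    rw [h2]
  have hcont : ContinuousOn F (F ⁻¹' Set.Ioo (0:ℝ) 1) := by
    rw [hSeq, continuousOn_iff_continuous_restrict]
    have hres : Set.restrict (G ⁻¹' e) F = fun r : (G ⁻¹' e) =>
        ((φ ⟨G r.1, r.2⟩ : Set.Ioo (0:ℝ) 1) : ℝ) := funext fun r => hFin r.1 r.2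
    show Continuous (Set.restrict (G ⁻¹' e) F)
    rw [hres]
    exact continuous_subtype_val.comp (φ.continuous.comp
      ((hGcont.comp continuous_subtype_val).subtype_mk _))
  have hper : ∀ r : ℝ, F (r + 2*π) = F r := by
    intro r
    have hGp : G (r + 2*π) = G r := by
      simp only [hG]; rw [Circle.exp_add_two_pi]
    by_cases hcase : G r ∈ e
    · have h2 : G (r + 2*π) ∈ e := by rw [hGp]; exact hcase
      rw [hFin _ h2, hFin _ hcase]
      have h3 : (⟨G (r + 2*π), h2⟩ : e) = ⟨G r, hcase⟩ := Subtype.ext hGp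
      rw [h3]
    · rw [hFout _ (by rw [hGp]; exact hcase), hFout _ hcase]
  have hstar : ∀ a b : ℝ, a < b → b - a < 2*π → Set.Ioo a b ⊆ F ⁻¹' Set.Ioo (0:ℝ) 1 →
      ∃ v, v ∈ Set.Ioo (0:ℝ) 1 ∧ (∃ r, r ∈ Set.Ioo a b ∧ F r = v) ∧
        ∀ r, F r = v → ∃ k : ℤ, r - 2*π*k ∈ Set.Ioo a b := by
    intro a b hab hlen hsub
    set A : Set Circle := Circle.exp '' Set.Icc b (a + 2*π) with hA
    have hAclosed : IsClosed A := (isCompact_Icc.image (map_continuous Circle.exp)).isClosed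
    have hAne : A ≠ Set.univ := by
      intro hAu
      have hmid : Circle.exp ((a+b)/2) ∈ A := by rw [hAu]; exact Set.mem_univ _
      obtain ⟨sA, hsA, hexp⟩ := hmid
      rw [Circle.exp_eq_exp] at hexp
      obtain ⟨mm, hmm⟩ := hexp
      obtain ⟨hsA1, hsA2⟩ := hsA
      rcases lt_trichotomy mm 0 with hm'|hm'|hm'
      · have hm1 : (mm:ℝ) ≤ -1 := by exact_mod_cast (by omega : mm ≤ -1)
        nlinarith
      · subst hm'; push_cast at hmm; linarith
      · have hm1 : (1:ℝ) ≤ (mm:ℝ) := by exact_mod_cast (by omega : 1 ≤ mm)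
        nlinarith
    have hyex : ∃ y : X, y ∉ g '' A := by
      by_contra hcon
      push_neg at hcon
      exact hirr A hAclosed hAne (Set.eq_univ_of_forall hcon)
    obtain ⟨y, hy⟩ := hyex
    have havoid : ∀ r : ℝ, G r = y →
        ∀ sA ∈ Set.Icc b (a + 2*π), Circle.exp sA ≠ Circle.exp r := by
      intro r hr sA hsA hexp
      exact hy ⟨Circle.exp sA, ⟨sA, hsA, rfl⟩, by rw [hexp]; exact hr⟩
    obtain ⟨z₀, hz₀⟩ := hsurj y
    have hGarg : G (Complex.arg (z₀ : ℂ)) = y := by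
      simp only [hG]; rw [Circle.exp_arg]; exact hz₀
    obtain ⟨k₀, hk₀⟩ := normalize a b (Complex.arg (z₀ : ℂ)) hab hlen (havoid _ hGarg)
    have hGr₁ : G (Complex.arg (z₀ : ℂ) - 2*π*k₀) = y := by
      simp only [hG]; rw [expk, Circle.exp_arg]; exact hz₀
    have hr₁S : G (Complex.arg (z₀ : ℂ) - 2*π*k₀) ∈ e := by
      have h6 := hsub hk₀
      rwa [hSeq] at h6
    refine ⟨F (Complex.arg (z₀ : ℂ) - 2*π*k₀), hval _ hr₁S, ⟨_, hk₀, rfl⟩, ?_⟩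
    intro r hr
    have hre : G r ∈ e := by
      have hmem : r ∈ F ⁻¹' Set.Ioo (0:ℝ) 1 := by
        simp only [Set.mem_preimage, hr]; exact hval _ hr₁S
      rwa [hSeq] at hmem
    have hGry : G r = y := by rw [hFeq r _ hre hr₁S hr, hGr₁]
    exact normalize a b r hab hlen (havoid r hGry)
  obtain ⟨k, hk⟩ := norm_rep (Complex.arg (s : ℂ)) (Complex.arg (t₀ : ℂ))
  have hune : Complex.arg (s : ℂ) - 2*π*k - Complex.arg (t₀ : ℂ) ≠ 0 := by
    intro h0
    apply hne
    have hexp : Circle.exp (Complex.arg (s : ℂ)) = Circle.exp (Complex.arg (t₀ : ℂ)) := by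
      rw [Circle.exp_eq_exp]
      exact ⟨k, by push_cast; linarith⟩
    rwa [Circle.exp_arg, Circle.exp_arg] at hexp
  have hFt₁ : F (Complex.arg (t₀ : ℂ)) = c := hcF _ (by
    simp only [hG]; rw [Circle.exp_arg]; exact ht₀)
  have hFt₂ : F (Complex.arg (s : ℂ) - 2*π*k) = c := hcF _ (by
    simp only [hG]; rw [expk, Circle.exp_arg]; exact hs)
  exact Ctx.core ⟨F, c, hcIoo, by rw [hSeq]; exact he_open.preimage hGcont, hcont, hper, hstar⟩
    (Complex.arg (t₀ : ℂ)) (Complex.arg (s : ℂ) - 2*π*k) hFt₁ hFt₂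
    ⟨lt_of_le_of_ne hk.1 (Ne.symm hune), by linarith [hk.2]⟩

end Reduction

end
end Stmt0Aux

/-- A strongly irreducible continuous surjection from the circle onto a
Peano continuum is edge-wise Eulerian. -/
theorem stmt_0 {X : Type*} [TopologicalSpace X] [CompactSpace X] [ConnectedSpace X]
    [LocallyConnectedSpace X] [TopologicalSpace.MetrizableSpace X] [Nonempty X]
    (g : Circle → X) (hg : Continuous g) (hsurj : Function.Surjective g)
    (hirr : StronglyIrreducible g) :
    EdgewiseEulerian g := by
  intro e he x hx
  obtain ⟨he_open, hne_homeo, -⟩ := he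
  obtain ⟨φ⟩ := hne_homeo
  obtain ⟨t₀, ht₀⟩ := hsurj x
  refine ⟨t₀, ?_⟩
  ext s
  simp only [Set.mem_preimage, Set.mem_singleton_iff]
  constructor
  · intro hs
    by_contra hne'
    exact Stmt0Aux.key g hg hsurj hirr e he_open φ x hx s t₀ hs ht₀ hne'
  · rintro rfl; exact ht₀
end

section
/- Let Y be a compact metrizable space and let g : [0,1] → Y be a continuous surjection. Then the following are equivalent: (a) g is arcwise increasing; (b) g is hereditarily irreducible; (c) g is strongly irreducible; (d) g is almost injective. -/
open Topology Set Filter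

section Helpers

open Set

/-- Homeomorphism between an `Icc` inside `unitInterval` and the corresponding real `Icc`. -/
def iccSubHomeo (a b : unitInterval) :
    (Set.Icc a b : Set unitInterval) ≃ₜ (Set.Icc (a:ℝ) (b:ℝ) : Set ℝ) where
  toFun x := ⟨(x.1 : ℝ), ⟨x.2.1, x.2.2⟩⟩
  invFun y := ⟨⟨y.1, ⟨a.2.1.trans y.2.1, y.2.2.trans b.2.2⟩⟩, ⟨y.2.1, y.2.2⟩⟩
  left_inv x := rfl
  right_inv y := rfl
  continuous_toFun := Continuous.subtype_mk (continuous_subtype_val.comp continuous_subtype_val) _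
  continuous_invFun := Continuous.subtype_mk (Continuous.subtype_mk continuous_subtype_val _) _

lemma homeo_preconn {X Z : Type*} [TopologicalSpace X] [TopologicalSpace Z]
    (e : X ≃ₜ Z) [PreconnectedSpace X] : PreconnectedSpace Z := by
  have h : IsPreconnected (e '' univ) := isPreconnected_univ.image e e.continuous.continuousOn
  rw [Set.image_univ, e.surjective.range_eq] at h
  exact ⟨h⟩

lemma subcont_Icc {a b : unitInterval} (h : a ≤ b) :
    IsSubcontinuum (Set.Icc a b : Set unitInterval) := by
  have hab : (a:ℝ) ≤ (b:ℝ) := h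
  refine ⟨isClosed_Icc, ⟨⟨a, le_rfl, h⟩, ?_⟩⟩
  haveI : PreconnectedSpace ↥(Set.Icc (a:ℝ) (b:ℝ)) :=
    Subtype.preconnectedSpace (isPreconnected_Icc)
  haveI : PreconnectedSpace ↥(Set.Icc a b : Set unitInterval) :=
    homeo_preconn (iccSubHomeo a b).symm
  exact isPreconnected_iff_preconnectedSpace.mpr inferInstance

noncomputable def iccSubHomeoI {a b : unitInterval} (h : a < b) :
    (Set.Icc a b : Set unitInterval) ≃ₜ (Set.Icc (0:ℝ) 1) :=
  (iccSubHomeo a b).trans (iccHomeoI (a:ℝ) (b:ℝ) h)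

lemma isArc_Icc {a b : unitInterval} (h : a < b) :
    IsArc (Set.Icc a b : Set unitInterval) := ⟨iccSubHomeoI h⟩

lemma arc_subcont {A : Set unitInterval} (hA : IsArc A) : IsSubcontinuum A := by
  obtain ⟨e⟩ := hA
  haveI : CompactSpace ↥(Set.Icc (0:ℝ) 1) := isCompact_iff_compactSpace.mp isCompact_Icc
  haveI : CompactSpace ↥A := e.symm.compactSpace
  have hAcp : IsCompact A := isCompact_iff_compactSpace.mpr inferInstance
  haveI : PreconnectedSpace ↥(Set.Icc (0:ℝ) 1) := Subtype.preconnectedSpace isPreconnected_Icc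
  haveI : PreconnectedSpace ↥A := homeo_preconn e.symm
  have hne : A.Nonempty := Set.nonempty_coe_sort.mp ⟨e.symm ⟨0, by norm_num⟩⟩
  exact ⟨hAcp.isClosed, hne, isPreconnected_iff_preconnectedSpace.mpr inferInstance⟩

lemma subcont_eq_Icc {A : Set unitInterval} (h : IsSubcontinuum A) :
    ∃ a b : unitInterval, a ≤ b ∧ A = Set.Icc a b := by
  obtain ⟨hcl, hne, hconn⟩ := h
  have hAcp : IsCompact A := hcl.isCompact
  set A' : Set ℝ := Subtype.val '' A with hA'
  have hA'pc : IsPreconnected A' := hconn.image _ continuous_subtype_val.continuousOn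
  have hA'cp : IsCompact A' := hAcp.image continuous_subtype_val
  have hA'ne : A'.Nonempty := hne.image _
  obtain ⟨α, hα⟩ := hA'cp.exists_isLeast hA'ne
  obtain ⟨β, hβ⟩ := hA'cp.exists_isGreatest hA'ne
  have hord : A'.OrdConnected := hA'pc.ordConnected
  have hAIcc : A' = Set.Icc α β := by
    apply Set.Subset.antisymm
    · exact fun x hx => ⟨hα.2 hx, hβ.2 hx⟩
    · exact hord.out hα.1 hβ.1
  obtain ⟨a, haA, haeq⟩ := hα.1
  obtain ⟨b, hbA, hbeq⟩ := hβ.1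
  refine ⟨a, b, ?_, ?_⟩
  · show (a:ℝ) ≤ (b:ℝ)
    rw [haeq, hbeq]
    exact (hα.2 hβ.1).trans (le_refl β) |>.trans_eq rfl |>.trans (le_refl _) |>.trans (le_refl _) |>.trans (le_refl _)
  · ext t
    constructor
    · intro ht
      have : (t:ℝ) ∈ A' := ⟨t, ht, rfl⟩
      rw [hAIcc] at this
      exact ⟨show (a:ℝ) ≤ (t:ℝ) from haeq ▸ this.1, show (t:ℝ) ≤ (b:ℝ) from hbeq ▸ this.2⟩
    · intro ht
      have : (t:ℝ) ∈ A' := by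
        rw [hAIcc]
        exact ⟨haeq ▸ ht.1, hbeq ▸ ht.2⟩
      obtain ⟨s, hsA, hs⟩ := this
      rwa [show s = t from Subtype.ext hs] at hsA

lemma exists_Ioo_sub {V : Set unitInterval} (hV : IsOpen V) {x : unitInterval} (hx : x ∈ V) :
    ∃ p q : unitInterval, p < q ∧ Set.Ioo p q ⊆ V := by
  obtain ⟨ε, hε, hb⟩ := Metric.isOpen_iff.mp hV x hx
  by_cases hx1 : (x:ℝ) < 1
  · have hq0 : (0:ℝ) ≤ min ((x:ℝ) + ε/2) 1 := le_min (le_trans x.2.1 (by linarith)) zero_le_one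
    refine ⟨x, ⟨min ((x:ℝ) + ε/2) 1, hq0, min_le_right _ _⟩, ?_, ?_⟩
    · show (x:ℝ) < min ((x:ℝ) + ε/2) 1
      exact lt_min (by linarith) hx1
    · intro t ht
      apply hb
      have h1 : (x:ℝ) < (t:ℝ) := ht.1
      have h2 : (t:ℝ) < min ((x:ℝ) + ε/2) 1 := ht.2
      have : (t:ℝ) < (x:ℝ) + ε/2 := lt_of_lt_of_le h2 (min_le_left _ _)
      rw [Metric.mem_ball, Subtype.dist_eq, Real.dist_eq, abs_lt]
      constructor <;> linarith
  · have hx0 : (0:ℝ) < (x:ℝ) := by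
      have := x.2.2
      have h1 : (x:ℝ) = 1 := le_antisymm x.2.2 (not_lt.mp hx1)
      rw [h1]; norm_num
    have hp1 : max ((x:ℝ) - ε/2) 0 ≤ 1 := max_le (le_trans (by linarith [x.2.2] : (x:ℝ) - ε/2 ≤ (x:ℝ)) x.2.2) zero_le_one
    refine ⟨⟨max ((x:ℝ) - ε/2) 0, le_max_right _ _, hp1⟩, x, ?_, ?_⟩
    · show max ((x:ℝ) - ε/2) 0 < (x:ℝ)
      exact max_lt (by linarith) hx0
    · intro t ht
      apply hb
      have h1 : max ((x:ℝ) - ε/2) 0 < (t:ℝ) := ht.1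
      have h2 : (t:ℝ) < (x:ℝ) := ht.2
      have : (x:ℝ) - ε/2 < (t:ℝ) := lt_of_le_of_lt (le_max_left _ _) h1
      rw [Metric.mem_ball, Subtype.dist_eq, Real.dist_eq, abs_lt]
      constructor <;> linarith

lemma keyK {Y : Type*} [TopologicalSpace Y] [T2Space Y]
    (g : unitInterval → Y) (hg : Continuous g) (h : ¬ AlmostInjective g) :
    ∃ p q j1 j2 : unitInterval, p < q ∧ j1 ≤ j2 ∧ (j2 < p ∨ q < j1) ∧
      ∀ t ∈ Set.Ioo p q, g t ∈ g '' Set.Icc j1 j2 := by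
  set S := {x : unitInterval | ∀ y : unitInterval, g y = g x → y = x} with hS
  obtain ⟨U, hUo, hUne, hUint⟩ : ∃ U, IsOpen U ∧ U.Nonempty ∧ U ∩ S = ∅ := by
    by_contra hc
    push_neg at hc
    exact h (dense_iff_inter_open.mpr fun U hU hne => hc U hU hne)
  -- index type
  let ι := {r : ℚ × ℚ // 0 ≤ (r.1:ℝ) ∧ (r.1:ℝ) < (r.2:ℝ) ∧ (r.2:ℝ) ≤ 1} × Bool
  let av : ι → unitInterval := fun i =>
    ⟨(i.1.1.1 : ℝ), ⟨i.1.2.1, (i.1.2.2.1.le.trans i.1.2.2.2)⟩⟩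
  let bv : ι → unitInterval := fun i =>
    ⟨(i.1.1.2 : ℝ), ⟨i.1.2.1.trans i.1.2.2.1.le, i.1.2.2.2⟩⟩
  let Jl : ι → unitInterval := fun i => cond i.2 (bv i) 0
  let Jr : ι → unitInterval := fun i => cond i.2 1 (av i)
  let Kl : ι → unitInterval := fun i => cond i.2 0 (bv i)
  let Kr : ι → unitInterval := fun i => cond i.2 (av i) 1
  let F : ι → Set unitInterval := fun i =>
    Set.Icc (Kl i) (Kr i) ∩ g ⁻¹' (g '' Set.Icc (Jl i) (Jr i))
  have hFcl : ∀ i, IsClosed (F i) := fun i =>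
    isClosed_Icc.inter (((isClosed_Icc.isCompact.image hg).isClosed).preimage hg)
  have hcover : U ⊆ ⋃ i, F i := by
    intro t ht
    have hnt : ¬ ∀ y : unitInterval, g y = g t → y = t := by
      intro hinj
      exact absurd hUint (Set.nonempty_iff_ne_empty.mp ⟨t, ht, hinj⟩)
    push_neg at hnt
    obtain ⟨s, hgs, hst⟩ := hnt
    rcases lt_or_gt_of_ne hst with hlt | hgt
    · -- s < t
      obtain ⟨r1, hr1a, hr1b⟩ := exists_rat_btwn (show (s:ℝ) < (t:ℝ) from hlt)
      obtain ⟨r2, hr2a, hr2b⟩ := exists_rat_btwn hr1b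
      have h0 : (0:ℝ) ≤ (r1:ℝ) := le_of_lt (lt_of_le_of_lt s.2.1 hr1a)
      have h2 : (r2:ℝ) ≤ 1 := le_of_lt (lt_of_lt_of_le hr2b t.2.2)
      refine Set.mem_iUnion.mpr ⟨(⟨(r1, r2), h0, hr2a, h2⟩, false), ?_, ?_⟩
      · exact ⟨le_of_lt hr2b, t.2.2⟩
      · exact ⟨s, ⟨s.2.1, le_of_lt hr1a⟩, hgs⟩
    · -- t < s
      obtain ⟨r1, hr1a, hr1b⟩ := exists_rat_btwn (show (t:ℝ) < (s:ℝ) from hgt)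
      obtain ⟨r2, hr2a, hr2b⟩ := exists_rat_btwn hr1b
      have h0 : (0:ℝ) ≤ (r1:ℝ) := le_of_lt (lt_of_le_of_lt t.2.1 hr1a)
      have h2 : (r2:ℝ) ≤ 1 := le_of_lt (lt_of_lt_of_le hr2b s.2.2)
      refine Set.mem_iUnion.mpr ⟨(⟨(r1, r2), h0, hr2a, h2⟩, true), ?_, ?_⟩
      · exact ⟨t.2.1, le_of_lt hr1a⟩
      · exact ⟨s, ⟨le_of_lt hr2b, s.2.2⟩, hgs⟩
  -- Baire category
  have hex : ∃ i, (interior (F i ∩ closure U)).Nonempty := by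
    by_contra hc
    push_neg at hc
    have hdense : ∀ i, Dense (F i ∩ closure U)ᶜ := fun i =>
      interior_eq_empty_iff_dense_compl.mp (hc i)
    have hD : Dense (⋂ i, (F i ∩ closure U)ᶜ) :=
      dense_iInter_of_isOpen
        (fun i => ((hFcl i).inter isClosed_closure).isOpen_compl) hdense
    obtain ⟨t, htU, htI⟩ := hD.inter_open_nonempty U hUo hUne
    obtain ⟨i, hti⟩ := Set.mem_iUnion.mp (hcover htU)
    exact (Set.mem_iInter.mp htI i) ⟨hti, subset_closure htU⟩
  obtain ⟨i, x, hx⟩ := hex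
  obtain ⟨p, q, hpq, hIsub⟩ := exists_Ioo_sub isOpen_interior hx
  have hIF : Set.Ioo p q ⊆ F i := fun t ht =>
    (interior_subset (hIsub ht)).1
  obtain ⟨m, hm⟩ := exists_between hpq
  have habi : (av i : ℝ) < (bv i : ℝ) := i.1.2.2.1
  obtain ⟨⟨⟨r1, r2⟩, hr⟩, b⟩ := i
  cases b
  · -- bool false : K = Icc (bv) 1, J = Icc 0 (av)
    have hmF := hIF hm
    have hbm : (bv (⟨(r1,r2),hr⟩, false) : ℝ) ≤ (m:ℝ) := hmF.1.1
    refine ⟨m, q, 0, av (⟨(r1,r2),hr⟩, false), hm.2, ?_, Or.inl ?_, ?_⟩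
    · show (0:ℝ) ≤ _
      exact hr.1
    · show (av (⟨(r1,r2),hr⟩, false) : ℝ) < (m:ℝ)
      exact lt_of_lt_of_le habi hbm
    · intro t ht
      exact (hIF ⟨lt_trans hm.1 ht.1, ht.2⟩).2
  · -- bool true : K = Icc 0 (av), J = Icc (bv) 1
    have hmF := hIF hm
    have hma : (m:ℝ) ≤ (av (⟨(r1,r2),hr⟩, true) : ℝ) := hmF.1.2
    refine ⟨p, m, bv (⟨(r1,r2),hr⟩, true), 1, hm.1, ?_, Or.inr ?_, ?_⟩
    · show ((bv (⟨(r1,r2),hr⟩, true)) : ℝ) ≤ 1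
      exact hr.2.2
    · show (m:ℝ) < (bv (⟨(r1,r2),hr⟩, true) : ℝ)
      exact lt_of_le_of_lt hma habi
    · intro t ht
      exact (hIF ⟨ht.1, lt_trans ht.2 hm.2⟩).2

lemma nested_Icc {a b c d : unitInterval} (hab : a ≤ b) (hcd : c ≤ d)
    (h : Set.Icc a b ⊂ Set.Icc c d) : c ≤ a ∧ b ≤ d ∧ (c < a ∨ b < d) := by
  have h1 : a ∈ Set.Icc c d := h.subset ⟨le_rfl, hab⟩
  have h2 : b ∈ Set.Icc c d := h.subset ⟨hab, le_rfl⟩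
  refine ⟨h1.1, h2.2, ?_⟩
  by_contra hc
  push_neg at hc
  obtain ⟨hac, hdb⟩ := hc
  exact h.ne (by rw [le_antisymm hac h1.1, le_antisymm h2.2 hdb])

end Helpers

/-- For a continuous surjection `g : [0,1] → Y` onto a compact metrizable
space, the notions arcwise increasing, hereditarily irreducible, strongly irreducible,
and almost injective are all equivalent. -/
theorem stmt_1 {Y : Type*} [TopologicalSpace Y] [CompactSpace Y]
    [TopologicalSpace.MetrizableSpace Y]
    (g : unitInterval → Y) (hg : Continuous g) (hsurj : Function.Surjective g) :
    List.TFAE [ArcwiseIncreasing g, HereditarilyIrreducible g,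
      StronglyIrreducible g, AlmostInjective g] := by
  tfae_have 1 → 2 := by
    intro h1 A B hA hB hAB
    obtain ⟨a, b, hab, rfl⟩ := subcont_eq_Icc hA
    obtain ⟨c, d, hcd, rfl⟩ := subcont_eq_Icc hB
    obtain ⟨hca, hbd, hor⟩ := nested_Icc hab hcd hAB
    have hcd' : c < d := by
      rcases hor with h | h
      · exact lt_of_lt_of_le h (hab.trans hbd)
      · exact lt_of_le_of_lt (hca.trans hab) h
    rcases lt_or_eq_of_le hab with hab' | hab'
    · exact h1 _ _ (isArc_Icc hab') (isArc_Icc hcd') hAB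
    · subst hab'
      rw [Set.ssubset_iff_subset_ne]
      refine ⟨Set.image_mono hAB.subset, ?_⟩
      intro heq
      have hsingle : g '' Set.Icc c d = {g a} := by
        rw [← heq, Set.Icc_self, Set.image_singleton]
      obtain ⟨m, hcm, hmd⟩ := exists_between hcd'
      have hss : Set.Icc c m ⊂ Set.Icc c d := by
        refine ⟨Set.Icc_subset_Icc_right hmd.le, fun hcon => ?_⟩
        exact absurd (hcon ⟨hcd'.le, le_rfl⟩).2 (not_le.mpr hmd)
      have hres := h1 _ _ (isArc_Icc hcm) (isArc_Icc hcd') hss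
      have hne : (g '' Set.Icc c m).Nonempty := ⟨g c, c, ⟨le_rfl, hcm.le⟩, rfl⟩
      have hsub2 : g '' Set.Icc c m ⊆ {g a} := hsingle ▸ hres.subset
      have heq2 : g '' Set.Icc c m = {g a} := hne.subset_singleton_iff.mp hsub2
      exact hres.ne (heq2.trans hsingle.symm)
  tfae_have 2 → 1 := fun h2 A B hA hB hAB =>
    h2 A B (arc_subcont hA) (arc_subcont hB) hAB
  tfae_have 4 → 2 := by
    intro h4 A B hA hB hAB
    obtain ⟨a, b, hab, rfl⟩ := subcont_eq_Icc hA
    obtain ⟨c, d, hcd, rfl⟩ := subcont_eq_Icc hB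
    obtain ⟨hca, hbd, hor⟩ := nested_Icc hab hcd hAB
    rw [Set.ssubset_iff_subset_ne]
    refine ⟨Set.image_mono hAB.subset, ?_⟩
    intro heq
    rcases hor with hlt | hlt
    · obtain ⟨t, htS, htI⟩ := h4.exists_mem_open isOpen_Ioo (Set.nonempty_Ioo.mpr hlt)
      have hginB : g t ∈ g '' Set.Icc c d :=
        ⟨t, ⟨htI.1.le, htI.2.le.trans (hab.trans hbd)⟩, rfl⟩
      rw [← heq] at hginB
      obtain ⟨s, hsA, hgs⟩ := hginB
      rw [htS s hgs] at hsA
      exact absurd hsA.1 (not_le.mpr htI.2)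
    · obtain ⟨t, htS, htI⟩ := h4.exists_mem_open isOpen_Ioo (Set.nonempty_Ioo.mpr hlt)
      have hginB : g t ∈ g '' Set.Icc c d :=
        ⟨t, ⟨(hca.trans hab).trans htI.1.le, htI.2.le⟩, rfl⟩
      rw [← heq] at hginB
      obtain ⟨s, hsA, hgs⟩ := hginB
      rw [htS s hgs] at hsA
      exact absurd hsA.2 (not_le.mpr htI.1)
  tfae_have 4 → 3 := by
    intro h4 A hAcl hAne heq
    obtain ⟨t, htS, htA⟩ := h4.exists_mem_open hAcl.isOpen_compl (Set.nonempty_compl.mpr hAne)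
    have hgt : g t ∈ g '' A := by rw [heq]; trivial
    obtain ⟨s, hsA, hgs⟩ := hgt
    exact htA (htS s hgs ▸ hsA)
  tfae_have 2 → 4 := by
    intro h2
    by_contra h4
    obtain ⟨p, q, j1, j2, hpq, hj, hside, hK⟩ := keyK g hg h4
    obtain ⟨m, hm1, hm2⟩ := exists_between hpq
    rcases hside with hj2p | hqj1
    · have hj1p : j1 ≤ p := hj.trans hj2p.le
      have hss : Set.Icc j1 p ⊂ Set.Icc j1 m :=
        ⟨Set.Icc_subset_Icc_right hm1.le,
          fun hcon => absurd (hcon ⟨hj1p.trans hm1.le, le_rfl⟩).2 (not_le.mpr hm1)⟩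
      have hres := h2 _ _ (subcont_Icc hj1p) (subcont_Icc (hj1p.trans hm1.le)) hss
      apply hres.not_subset
      rintro y ⟨t, ht, rfl⟩
      rcases le_or_gt t p with hle | hlt
      · exact ⟨t, ⟨ht.1, hle⟩, rfl⟩
      · obtain ⟨s, hs, hgs⟩ := hK t ⟨hlt, lt_of_le_of_lt ht.2 hm2⟩
        exact ⟨s, ⟨hs.1, hs.2.trans hj2p.le⟩, hgs⟩
    · have hqj2 : q ≤ j2 := hqj1.le.trans hj
      have hss : Set.Icc q j2 ⊂ Set.Icc m j2 :=
        ⟨Set.Icc_subset_Icc_left hm2.le,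
          fun hcon => absurd (hcon ⟨le_rfl, hm2.le.trans hqj2⟩).1 (not_le.mpr hm2)⟩
      have hres := h2 _ _ (subcont_Icc hqj2) (subcont_Icc (hm2.le.trans hqj2)) hss
      apply hres.not_subset
      rintro y ⟨t, ht, rfl⟩
      rcases le_or_gt q t with hle | hlt
      · exact ⟨t, ⟨hle, ht.2⟩, rfl⟩
      · obtain ⟨s, hs, hgs⟩ := hK t ⟨lt_of_lt_of_le hm1 ht.1, hlt⟩
        exact ⟨s, ⟨hqj1.le.trans hs.1, hs.2⟩, hgs⟩
  tfae_have 3 → 4 := by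
    intro h3
    by_contra h4
    obtain ⟨p, q, j1, j2, hpq, hj, hside, hK⟩ := keyK g hg h4
    obtain ⟨m, hm1, hm2⟩ := exists_between hpq
    have hAne : (Set.Ioo p q)ᶜ ≠ Set.univ := by
      intro hA
      have hmem : m ∈ (Set.Ioo p q)ᶜ := hA ▸ Set.mem_univ m
      exact hmem ⟨hm1, hm2⟩
    apply h3 _ isOpen_Ioo.isClosed_compl hAne
    apply Set.eq_univ_of_forall
    intro y
    obtain ⟨t, rfl⟩ := hsurj y
    by_cases ht : t ∈ Set.Ioo p q
    · obtain ⟨s, hs, hgs⟩ := hK t ht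
      refine ⟨s, ?_, hgs⟩
      intro hsIoo
      rcases hside with hc | hc
      · exact absurd hsIoo.1 (not_lt.mpr (hs.2.trans hc.le))
      · exact absurd hsIoo.2 (not_lt.mpr (hc.le.trans hs.1))
    · exact ⟨t, ht, rfl⟩
  tfae_finish
end

section
/- Let X be a Peano continuum and let g : S¹ → X be a continuous surjection. Then the following are equivalent: (a) g is arcwise increasing; (b) g is hereditarily irreducible; (c) g is strongly irreducible; (d) g is almost injective; (e) g is irreducible. -/
open Topology Set Filter

noncomputable section
open Real
namespace CircleAux

lemma two_pi_pos : (0:ℝ) < 2 * π := by positivity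

lemma exp_ne_of_lt {s t : ℝ} (h1 : 0 < s - t) (h2 : s - t < 2 * π) :
    Circle.exp s ≠ Circle.exp t := by
  intro h
  obtain ⟨m, hm⟩ := Circle.exp_eq_exp.1 h
  have : s - t = m * (2 * π) := by linarith
  have h0 : (0:ℝ) < (m:ℝ) := by nlinarith [two_pi_pos]
  have h1' : (m:ℝ) < 1 := by nlinarith [two_pi_pos]
  have h0' : (0:ℤ) < m := by exact_mod_cast h0
  have h1'' : m < (1:ℤ) := by exact_mod_cast h1'
  omega

lemma injOn_exp {u v : ℝ} (h : v - u < 2 * π) : InjOn Circle.exp (Icc u v) := by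
  rintro s ⟨hs1, hs2⟩ t ⟨ht1, ht2⟩ hst
  by_contra hne
  rcases lt_or_gt_of_ne hne with hlt | hlt
  · exact exp_ne_of_lt (by linarith) (by linarith) hst.symm
  · exact exp_ne_of_lt (by linarith) (by linarith) hst

lemma exp_surjective : Function.Surjective Circle.exp := fun z => ⟨Complex.arg z, Circle.exp_arg z⟩

lemma compl_image_Ioo {a b : ℝ} (h1 : a < b) (h2 : b - a < 2 * π) :
    (Circle.exp '' Ioo a b)ᶜ = Circle.exp '' Icc b (a + 2 * π) := by
  ext x
  constructor
  · intro hx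
    obtain ⟨t0, rfl⟩ := exp_surjective x
    set t := toIcoMod two_pi_pos a t0 with htdef
    have ht : t ∈ Ico a (a + 2 * π) := toIcoMod_mem_Ico two_pi_pos a t0
    have hexp : Circle.exp t = Circle.exp t0 := by
      refine Circle.exp_eq_exp.2 ⟨-(toIcoDiv two_pi_pos a t0), ?_⟩
      have := self_sub_toIcoMod two_pi_pos a t0
      push_cast
      rw [zsmul_eq_mul] at this
      push_cast at this
      linarith
    rcases eq_or_lt_of_le ht.1 with heq | hlt
    · exact ⟨a + 2 * π, ⟨by linarith, le_refl _⟩, by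
        rw [Circle.exp_add_two_pi]; rw [heq]; exact hexp⟩
    · have : t ∉ Ioo a b := by
        intro hmem
        exact hx ⟨t, hmem, hexp⟩
      have hbt : b ≤ t := by
        rcases le_or_gt b t with h | h
        · exact h
        · exact absurd ⟨hlt, h⟩ this
      exact ⟨t, ⟨hbt, le_of_lt ht.2⟩, hexp⟩
  · rintro ⟨t, ⟨ht1, ht2⟩, rfl⟩ ⟨s, ⟨hs1, hs2⟩, hst⟩
    exact exp_ne_of_lt (show 0 < t - s by linarith) (by linarith) hst.symm



lemma isSubcontinuum_image_Icc {u v : ℝ} (h : u ≤ v) :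
    IsSubcontinuum (Circle.exp '' Icc u v) := by
  constructor
  · exact (isCompact_Icc.image Circle.exp.continuous).isClosed
  · exact ((isConnected_Icc h).image _ Circle.exp.continuous.continuousOn)

lemma isArc_image_Icc {u v : ℝ} (h1 : u < v) (h2 : v - u < 2 * π) :
    IsArc (Circle.exp '' Icc u v) := by
  have hinj : Function.Injective (fun t : Icc u v => Circle.exp (t : ℝ)) := by
    intro s t hst
    exact Subtype.ext (injOn_exp h2 s.2 t.2 hst)
  have hce := (Circle.exp.continuous.comp continuous_subtype_val).isClosedEmbedding hinj
  have e1 : (Icc u v) ≃ₜ (Set.range fun t : Icc u v => Circle.exp (t : ℝ)) :=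
    hce.toIsEmbedding.toHomeomorph
  have hre : Circle.exp '' Icc u v = Set.range fun t : Icc u v => Circle.exp (t : ℝ) :=
    Set.image_eq_range _ _
  exact ⟨(Homeomorph.setCongr hre).trans (e1.symm.trans (iccHomeoI u v h1))⟩

lemma image_Ioo_eq_compl {a b : ℝ} (h1 : a < b) (h2 : b - a < 2 * π) :
    Circle.exp '' Ioo a b = (Circle.exp '' Icc b (a + 2 * π))ᶜ := by
  rw [← compl_image_Ioo h1 h2, compl_compl]

variable {X : Type*} [TopologicalSpace X]

lemma irr_to_her (g : Circle → X) (hsurj : Function.Surjective g)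
    (hirr : IrreducibleMap g) : HereditarilyIrreducible g := by
  intro A B hA hB hAB
  have hsub : g '' A ⊆ g '' B := Set.image_mono  hAB.subset
  rw [ssubset_iff_subset_ne]
  refine ⟨hsub, ?_⟩
  intro heq
  have hpi := Real.pi_pos
  by_cases hBuniv : B = univ
  · have hAne : A ≠ univ := by
      intro h; exact hAB.not_subset (hBuniv ▸ h ▸ subset_rfl)
    refine hirr A hA hAne ?_
    rw [heq, hBuniv, Set.image_univ, Set.range_eq_univ.2 hsurj]
  · obtain ⟨x0, hx0⟩ := (Set.ne_univ_iff_exists_notMem B).1 hBuniv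
    obtain ⟨t0, rfl⟩ := exp_surjective x0
    have hBo : IsOpen (Circle.exp ⁻¹' Bᶜ) := hB.1.isOpen_compl.preimage Circle.exp.continuous
    obtain ⟨δ, hδpos, hδ⟩ := Metric.isOpen_iff.1 hBo t0 hx0
    set δ' : ℝ := min (δ / 2) (π / 2) with hδ'def
    have hδ'pos : 0 < δ' := lt_min (by linarith) (by linarith)
    have hδ'le : δ' ≤ δ / 2 := min_le_left _ _
    have hδ'pi : δ' ≤ π / 2 := min_le_right _ _
    have hab : t0 + δ' < (t0 - δ') + 2 * π := by linarith
    have hab2 : ((t0 - δ') + 2 * π) - (t0 + δ') < 2 * π := by linarith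
    have hdisj : ∀ s ∈ Ioo (t0 - δ') (t0 + δ'), Circle.exp s ∉ B := by
      intro s hs
      refine hδ ?_
      rw [Real.ball_eq_Ioo]
      exact ⟨by linarith [hs.1], by linarith [hs.2]⟩
    have hBC : B ⊆ Circle.exp '' Icc (t0 + δ') ((t0 - δ') + 2 * π) := by
      intro y hy
      have hnot : y ∈ (Circle.exp '' Ioo (t0 - δ') (t0 + δ'))ᶜ := by
        rintro ⟨s, hs, rfl⟩; exact hdisj s hs hy
      rwa [compl_image_Ioo (by linarith) (by linarith)] at hnot
    set a : ℝ := t0 + δ'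
    set b : ℝ := (t0 - δ') + 2 * π
    set S : Set ℝ := Icc a b ∩ Circle.exp ⁻¹' B with hSdef
    have hScl : IsClosed S := isClosed_Icc.inter (hB.1.preimage Circle.exp.continuous)
    have hScpt : IsCompact S := isCompact_Icc.of_isClosed_subset hScl Set.inter_subset_left
    have hmemS : ∀ y ∈ B, ∃ t ∈ S, Circle.exp t = y := by
      intro y hy
      obtain ⟨t, ht, rfl⟩ := hBC hy
      exact ⟨t, ⟨ht, hy⟩, rfl⟩
    have hSne : S.Nonempty := by
      obtain ⟨y, hy⟩ := hB.2.nonempty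
      obtain ⟨t, ht, _⟩ := hmemS y hy
      exact ⟨t, ht⟩
    have hSconn : IsPreconnected S := by
      have hinj : Function.Injective (fun t : Icc a b => Circle.exp (t : ℝ)) := by
        intro s t hst
        exact Subtype.ext (injOn_exp hab2 s.2 t.2 hst)
      have hce := (Circle.exp.continuous.comp continuous_subtype_val).isClosedEmbedding hinj
      have hrange : B ⊆ Set.range (fun t : Icc a b => Circle.exp (t : ℝ)) := by
        intro y hy
        obtain ⟨t, ht, rfl⟩ := hBC hy
        exact ⟨⟨t, ht⟩, rfl⟩
      have hpre : IsPreconnected ((fun t : Icc a b => Circle.exp (t : ℝ)) ⁻¹' B) :=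
        hB.2.isPreconnected.preimage_of_isClosedMap hinj hce.isClosedMap hrange
      have himg : Subtype.val '' ((fun t : Icc a b => Circle.exp (t : ℝ)) ⁻¹' B) = S := by
        ext t
        constructor
        · rintro ⟨⟨t', ht'⟩, hmem, rfl⟩; exact ⟨ht', hmem⟩
        · rintro ⟨ht1, ht2⟩; exact ⟨⟨t, ht1⟩, ht2, rfl⟩
      exact himg ▸ hpre.image _ continuous_subtype_val.continuousOn
    set β0 : ℝ := sInf S with hβ0def
    set β1 : ℝ := sSup S with hβ1def
    have hβ0S : β0 ∈ S := hScpt.sInf_mem hSne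
    have hβ1S : β1 ∈ S := hScpt.sSup_mem hSne
    have hSeq : S = Icc β0 β1 := by
      apply Set.Subset.antisymm
      · exact fun t ht => ⟨csInf_le hScpt.bddBelow ht, le_csSup hScpt.bddAbove ht⟩
      · exact hSconn.Icc_subset hβ0S hβ1S
    set T : Set ℝ := Icc a b ∩ Circle.exp ⁻¹' A with hTdef
    have hTcl : IsClosed T := isClosed_Icc.inter (hA.1.preimage Circle.exp.continuous)
    obtain ⟨y, hyB, hyA⟩ := Set.exists_of_ssubset hAB
    obtain ⟨ty, htyS, htyexp⟩ := hmemS y hyB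
    have hβlt : β0 < β1 := by
      rcases lt_or_ge β0 β1 with h | h
      · exact h
      · exfalso
        have hsingle : ∀ t ∈ S, t = β0 := by
          intro t ht
          rw [hSeq] at ht
          exact le_antisymm (ht.2.trans h) ht.1
        obtain ⟨a0, ha0⟩ := hA.2.nonempty
        obtain ⟨ta, htaS, htaexp⟩ := hmemS a0 (hAB.subset ha0)
        have : y = a0 := by rw [← htyexp, ← htaexp, hsingle ty htyS, hsingle ta htaS]
        exact hyA (this ▸ ha0)
    have hex : ∃ t' ∈ Ioo β0 β1, t' ∉ T := by
      by_contra hcon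
      push_neg at hcon
      have hsub2 : Icc β0 β1 ⊆ T := by
        have h1 : closure (Ioo β0 β1) ⊆ closure T := closure_mono (fun t ht => hcon t ht)
        rwa [closure_Ioo hβlt.ne, hTcl.closure_eq] at h1
      exact hyA (htyexp ▸ (hsub2 (hSeq ▸ htyS)).2)
    obtain ⟨t', ht'Ioo, ht'T⟩ := hex
    have hUo : IsOpen (Ioo β0 β1 ∩ Tᶜ) := isOpen_Ioo.inter hTcl.isOpen_compl
    obtain ⟨η, hηpos, hη⟩ := Metric.isOpen_iff.1 hUo t' ⟨ht'Ioo, ht'T⟩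
    set η' : ℝ := min (η / 2) 1 with hη'def
    have hη'pos : 0 < η' := lt_min (by linarith) one_pos
    have hη'le : η' ≤ η / 2 := min_le_left _ _
    have hη'1 : η' ≤ 1 := min_le_right _ _
    have hs01 : t' - η' < t' + η' := by linarith
    have hs012pi : (t' + η') - (t' - η') < 2 * π := by
      have := Real.pi_gt_three; linarith
    have hball : Icc (t' - η') (t' + η') ⊆ Ioo β0 β1 ∩ Tᶜ := by
      intro s hs
      refine hη ?_
      rw [Real.ball_eq_Ioo]
      exact ⟨by linarith [hs.1], by linarith [hs.2]⟩
    set W : Set Circle := Circle.exp '' Ioo (t' - η') (t' + η') with hWdef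
    set K : Set Circle := Circle.exp '' Icc (t' + η') ((t' - η') + 2 * π) with hKdef
    have hWK : W = Kᶜ := image_Ioo_eq_compl hs01 hs012pi
    have hKsub : IsSubcontinuum K := isSubcontinuum_image_Icc (by linarith)
    have ht'W : Circle.exp t' ∈ W := ⟨t', ⟨by linarith, by linarith⟩, rfl⟩
    have hKne : K ≠ univ := by
      intro h
      have h2 : Circle.exp t' ∈ K := h ▸ Set.mem_univ _
      rw [← compl_compl K, ← hWK] at h2
      exact h2 ht'W
    have hAK : A ⊆ K := by
      intro x hx
      have hxW : x ∉ W := by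
        rintro ⟨s, hs, rfl⟩
        have hsb := hball (Ioo_subset_Icc_self hs)
        have hsS : s ∈ S := hSeq ▸ Ioo_subset_Icc_self hsb.1
        exact hsb.2 ⟨hsS.1, hx⟩
      rw [← compl_compl K, ← hWK]
      exact hxW
    have hKall : g '' K = univ := by
      apply Set.eq_univ_of_forall
      intro v
      obtain ⟨z, rfl⟩ := hsurj v
      by_cases hzW : z ∈ W
      · obtain ⟨s, hs, rfl⟩ := hzW
        have hsb := hball (Ioo_subset_Icc_self hs)
        have hsS : s ∈ S := hSeq ▸ Ioo_subset_Icc_self hsb.1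
        have : g (Circle.exp s) ∈ g '' B := ⟨Circle.exp s, hsS.2, rfl⟩
        rw [← heq] at this
        exact (Set.image_mono (f := g) hAK) this
      · have : z ∈ K := by rw [← compl_compl K, ← hWK]; exact hzW
        exact ⟨z, this, rfl⟩
    exact hirr K hKsub hKne hKall

lemma arcinc_to_almostinj {X : Type*} [TopologicalSpace X]
    [TopologicalSpace.MetrizableSpace X]
    (g : Circle → X) (hg : Continuous g) (hsurj : Function.Surjective g)
    (hainc : ArcwiseIncreasing g) : AlmostInjective g := by
  by_contra hnd
  rw [AlmostInjective, dense_iff_inter_open] at hnd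
  push_neg at hnd
  obtain ⟨O, hOopen, hOne, hOempty⟩ := hnd
  have hnoninj : ∀ x ∈ O, ∃ y, g y = g x ∧ y ≠ x := by
    intro x hx
    have hxS : ¬ (∀ y : Circle, g y = g x → y = x) := by
      intro hxS
      exact Set.eq_empty_iff_forall_notMem.1 hOempty x ⟨hx, hxS⟩
    push_neg at hxS
    exact hxS
  have hpi := Real.pi_pos
  -- choose a closed arc C̄ inside O
  obtain ⟨x0, hx0⟩ := hOne
  obtain ⟨t0, rfl⟩ := exp_surjective x0
  obtain ⟨δ, hδpos, hδ⟩ := Metric.isOpen_iff.1 (hOopen.preimage Circle.exp.continuous) t0 hx0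
  set δ' : ℝ := min (δ / 2) 1 with hδ'def
  have hδ'pos : 0 < δ' := lt_min (by linarith) one_pos
  have hδ'le : δ' ≤ δ / 2 := min_le_left _ _
  set c : ℝ := t0 - δ'
  set d : ℝ := t0 + δ'
  have hcd : c < d := by simp only [c, d]; linarith
  set Cbar : Set Circle := Circle.exp '' Icc c d with hCdef
  have hCO : Cbar ⊆ O := by
    rintro _ ⟨t, ht, rfl⟩
    refine hδ ?_
    rw [Real.ball_eq_Ioo]
    exact ⟨by simp only [c] at ht; linarith [ht.1], by simp only [d] at ht; linarith [ht.2]⟩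
  -- the closed sets E n
  set E : ℕ → Set Circle :=
    fun n => Prod.fst '' {p : Circle × Circle | g p.2 = g p.1 ∧ 1 / (n + 1 : ℝ) ≤ dist p.1 p.2}
    with hEdef
  have hEclosed : ∀ n, IsClosed (E n) := by
    intro n
    have hP : IsClosed {p : Circle × Circle | g p.2 = g p.1 ∧ 1 / (n + 1 : ℝ) ≤ dist p.1 p.2} :=
      (isClosed_eq (hg.comp continuous_snd) (hg.comp continuous_fst)).inter
        (isClosed_le continuous_const (continuous_dist))
    exact (hP.isCompact.image continuous_fst).isClosed
  have hcover : ∀ x ∈ Cbar, ∃ n : ℕ, x ∈ E n := by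
    intro x hx
    obtain ⟨y, hgy, hyne⟩ := hnoninj x (hCO hx)
    have hd : 0 < dist x y := dist_pos.2 (Ne.symm hyne)
    obtain ⟨n, hn⟩ := exists_nat_one_div_lt hd
    exact ⟨n, ⟨(x, y), ⟨hgy, le_of_lt hn⟩, rfl⟩⟩
  -- Baire category on the compact arc C̄
  have hCcpt : IsCompact Cbar := isCompact_Icc.image Circle.exp.continuous
  haveI : CompactSpace ↥Cbar := isCompact_iff_compactSpace.1 hCcpt
  haveI : Nonempty ↥Cbar := ⟨⟨Circle.exp t0, ⟨t0, ⟨by simp only [c]; linarith,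
    by simp only [d]; linarith⟩, rfl⟩⟩⟩
  have hbaire := nonempty_interior_of_iUnion_of_closed
    (f := fun n : ℕ => (Subtype.val ⁻¹' E n : Set ↥Cbar))
    (fun n => (hEclosed n).preimage continuous_subtype_val)
    (by
      apply Set.eq_univ_of_forall
      intro z
      obtain ⟨n, hn⟩ := hcover z.1 z.2
      exact Set.mem_iUnion.2 ⟨n, hn⟩)
  obtain ⟨n, z, hz⟩ := hbaire
  obtain ⟨V, hVsub, hVopen, hzV⟩ := mem_interior.1 hz
  obtain ⟨U, hUopen, hUV⟩ := isOpen_induced_iff.1 hVopen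
  have hUC : ∀ x ∈ U, x ∈ Cbar → x ∈ E n := by
    intro x hxU hxC
    exact hVsub (show (⟨x, hxC⟩ : ↥Cbar) ∈ V from hUV ▸ hxU)
  have hzU : (z : Circle) ∈ U := by
    have : z ∈ Subtype.val ⁻¹' U := hUV ▸ hzV
    exact this
  obtain ⟨tz, htz, htzexp⟩ := z.2
  -- pick a parameter t' in the open interval (c,d) with exp t' ∈ U
  obtain ⟨ρ, hρpos, hρ⟩ := Metric.isOpen_iff.1 (hUopen.preimage Circle.exp.continuous) tz
    (by rw [Set.mem_preimage, htzexp]; exact hzU)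
  have hmaxmin : max c (tz - ρ) < min d (tz + ρ) := by
    have h1 : c ≤ tz := htz.1
    have h2 : tz ≤ d := htz.2
    exact max_lt (lt_min (by linarith) (by linarith)) (lt_min (by linarith) (by linarith))
  obtain ⟨t', ht'1, ht'2⟩ := exists_between hmaxmin
  have ht'cd : t' ∈ Ioo c d := ⟨(le_max_left _ _).trans_lt ht'1, ht'2.trans_le (min_le_left _ _)⟩
  have ht'U : t' ∈ Circle.exp ⁻¹' U := by
    refine hρ ?_
    rw [Real.ball_eq_Ioo]
    exact ⟨(le_max_right _ _).trans_lt ht'1, ht'2.trans_le (min_le_right _ _)⟩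
  -- radius for the small-diameter condition
  set r : ℝ := 1 / (2 * (n + 1 : ℝ)) with hrdef
  have hrpos : 0 < r := by positivity
  set V2 : Set ℝ := Ioo c d ∩ Circle.exp ⁻¹' U ∩
    Circle.exp ⁻¹' (Metric.ball (Circle.exp t') r) with hV2def
  have hV2open : IsOpen V2 :=
    ((isOpen_Ioo.inter (hUopen.preimage Circle.exp.continuous)).inter
      ((Metric.isOpen_ball).preimage Circle.exp.continuous))
  have ht'V2 : t' ∈ V2 := ⟨⟨ht'cd, ht'U⟩, by
    rw [Set.mem_preimage]; exact Metric.mem_ball_self hrpos⟩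
  obtain ⟨ρ2, hρ2pos, hρ2⟩ := Metric.isOpen_iff.1 hV2open t' ht'V2
  set η' : ℝ := min (ρ2 / 2) 1 with hη'def
  have hη'pos : 0 < η' := lt_min (by linarith) one_pos
  have hη'le : η' ≤ ρ2 / 2 := min_le_left _ _
  have hη'1 : η' ≤ 1 := min_le_right _ _
  set s0 : ℝ := t' - η' with hs0def
  set s1 : ℝ := t' + η' with hs1def
  have hs01 : s0 < s1 := by simp only [hs0def, hs1def]; linarith
  have hs012pi : s1 - s0 < 2 * π := by
    have := Real.pi_gt_three
    simp only [hs0def, hs1def]; linarith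
  have hIccV2 : Icc s0 s1 ⊆ V2 := by
    intro s hs
    refine hρ2 ?_
    rw [Real.ball_eq_Ioo]
    constructor
    · simp only [hs0def] at hs; linarith [hs.1]
    · simp only [hs1def] at hs; linarith [hs.2]
  set W : Set Circle := Circle.exp '' Ioo s0 s1 with hWdef
  set K : Set Circle := Circle.exp '' Icc s1 (s0 + 2 * π) with hKdef
  have hWK : W = Kᶜ := image_Ioo_eq_compl hs01 hs012pi
  -- all points of W have mates outside W
  have hmate : ∀ w ∈ W, ∃ y, g y = g w ∧ y ∉ W := by
    rintro _ ⟨s, hs, rfl⟩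
    have hsV2 := hIccV2 (Ioo_subset_Icc_self hs)
    have hsE : Circle.exp s ∈ E n := by
      refine hUC _ hsV2.1.2 ⟨s, Ioo_subset_Icc_self hsV2.1.1, rfl⟩
    obtain ⟨⟨x1, y⟩, ⟨hgy, hdisty⟩, hfst⟩ := hsE
    simp only at hfst
    subst hfst
    refine ⟨y, hgy, ?_⟩
    rintro ⟨s'', hs'', rfl⟩
    have hs''V2 := hIccV2 (Ioo_subset_Icc_self hs'')
    have hd1 : dist (Circle.exp s) (Circle.exp t') < r := hsV2.2
    have hd2 : dist (Circle.exp s'') (Circle.exp t') < r := hs''V2.2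
    have h2r : 2 * r = 1 / (n + 1 : ℝ) := by
      rw [hrdef]
      have h : (n + 1 : ℝ) ≠ 0 := by positivity
      field_simp
    have htri := dist_triangle (Circle.exp s) (Circle.exp t') (Circle.exp s'')
    rw [dist_comm (Circle.exp s'') (Circle.exp t')] at hd2
    have : dist (Circle.exp s) (Circle.exp s'') < 1 / (n + 1 : ℝ) := by linarith
    linarith [hdisty]
  -- K maps onto everything
  have hKall : g '' K = univ := by
    apply Set.eq_univ_of_forall
    intro v
    obtain ⟨w, rfl⟩ := hsurj v
    by_cases hwW : w ∈ W
    · obtain ⟨y, hgy, hyW⟩ := hmate w hwW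
      have : y ∈ K := by rw [← compl_compl K, ← hWK]; exact hyW
      exact ⟨y, this, hgy⟩
    · have : w ∈ K := by rw [← compl_compl K, ← hWK]; exact hwW
      exact ⟨w, this, rfl⟩
  -- contradiction with arcwise increasing
  have hKarc : IsArc K := isArc_image_Icc (by linarith) (by linarith)
  set K' : Set Circle := Circle.exp '' Icc s1 (s0 + 2 * π + η') with hK'def
  have hK'arc : IsArc K' := isArc_image_Icc (by linarith)
    (by simp only [hs0def, hs1def]; linarith)
  have hKK' : K ⊆ K' := Set.image_mono  (Icc_subset_Icc_right (by linarith))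
  have hx'K' : Circle.exp (s0 + 2 * π + η') ∈ K' :=
    ⟨s0 + 2 * π + η', ⟨by simp only [hs0def, hs1def]; linarith, le_refl _⟩, rfl⟩
  have hx'K : Circle.exp (s0 + 2 * π + η') ∉ K := by
    rintro ⟨t, ⟨ht1, ht2⟩, hteq⟩
    refine exp_ne_of_lt (s := s0 + 2 * π + η') (t := t) ?_ ?_ hteq.symm
    · linarith
    · simp only [hs0def, hs1def] at ht1 ⊢; linarith
  have hss : K ⊂ K' := ⟨hKK', fun h => hx'K (h hx'K')⟩
  have := (hainc K K' hKarc hK'arc hss).2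
  exact this (by rw [hKall]; exact Set.subset_univ _)

lemma isArc_isSubcontinuum {D : Type*} [TopologicalSpace D] [T2Space D] {A : Set D}
    (h : IsArc A) : IsSubcontinuum A := by
  obtain ⟨e⟩ := h
  haveI : ConnectedSpace (Set.Icc (0:ℝ) 1) :=
    isConnected_iff_connectedSpace.1 (isConnected_Icc zero_le_one)
  have hrange : Set.range (Subtype.val ∘ e.symm) = A := by
    rw [Set.range_comp, e.symm.surjective.range_eq, Subtype.coe_image_univ]
  have hcont : Continuous (Subtype.val ∘ e.symm) :=
    continuous_subtype_val.comp e.symm.continuous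
  have hconn : IsConnected A := hrange ▸ isConnected_range hcont
  have hcpt : IsCompact A := hrange ▸ isCompact_range hcont
  exact ⟨hcpt.isClosed, hconn⟩

lemma her_to_arc {D X : Type*} [TopologicalSpace D] [T2Space D] {g : D → X}
    (h : HereditarilyIrreducible g) : ArcwiseIncreasing g := fun A B hA hB hAB =>
  h A B (isArc_isSubcontinuum hA) (isArc_isSubcontinuum hB) hAB

lemma almostinj_to_strong {D X : Type*} [TopologicalSpace D] {g : D → X}
    (h : AlmostInjective g) : StronglyIrreducible g := by
  intro A hA hAne hsurjA
  obtain ⟨x, hxA⟩ := (Set.ne_univ_iff_exists_notMem A).1 hAne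
  obtain ⟨y, hyinj, hy⟩ := h.exists_mem_open hA.isOpen_compl ⟨x, hxA⟩
  have : g y ∈ g '' A := hsurjA ▸ Set.mem_univ _
  obtain ⟨z, hzA, hzy⟩ := this
  exact hy (hyinj z hzy ▸ hzA)

lemma strong_to_irr {D X : Type*} [TopologicalSpace D] {g : D → X}
    (h : StronglyIrreducible g) : IrreducibleMap g := fun K hK hKne => h K hK.1 hKne

end CircleAux
end


/-- For a continuous surjection `g : S¹ → X` onto a Peano continuum,
the notions arcwise increasing, hereditarily irreducible, strongly irreducible,
almost injective, and irreducible are all equivalent. -/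
theorem stmt_2 {X : Type*} [TopologicalSpace X] [CompactSpace X] [ConnectedSpace X]
    [LocallyConnectedSpace X] [TopologicalSpace.MetrizableSpace X] [Nonempty X]
    (g : Circle → X) (hg : Continuous g) (hsurj : Function.Surjective g) :
    List.TFAE [ArcwiseIncreasing g, HereditarilyIrreducible g,
      StronglyIrreducible g, AlmostInjective g, IrreducibleMap g] := by
  tfae_have 2 → 1 := fun h => CircleAux.her_to_arc h
  tfae_have 1 → 4 := fun h => CircleAux.arcinc_to_almostinj g hg hsurj h
  tfae_have 4 → 3 := fun h => CircleAux.almostinj_to_strong h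
  tfae_have 3 → 5 := fun h => CircleAux.strong_to_irr h
  tfae_have 5 → 2 := fun h => CircleAux.irr_to_her g hsurj h
  tfae_finish
end

section
/- Let X be a Peano continuum and let e be a free arc of X. Then the subspace X \ e has at most two connected components, and every connected component of X \ e is, in the subspace topology, a Peano continuum (nonempty, compact, connected and locally connected). -/
open Topology Set Filter

namespace Stmt6Aux

structure ArcParam (X : Type*) [TopologicalSpace X] (e : Set X) where
  g : ℝ → X
  cont : ContinuousOn g (Set.Ioo 0 1)
  inj : Set.InjOn g (Set.Ioo 0 1)
  himage : g '' (Set.Ioo 0 1) = e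
  opn : ∀ s : Set ℝ, IsOpen s → IsOpen (g '' (s ∩ Set.Ioo 0 1))

variable {X : Type*} [TopologicalSpace X] {e : Set X}

/-- The filter of the "left end" of the arc. -/
def lfil (P : ArcParam X e) : Filter X := Filter.map P.g (𝓝[Set.Ioo (0:ℝ) 1] (0:ℝ))

lemma nhdsWithin_zero_neBot : (𝓝[Set.Ioo (0:ℝ) 1] (0:ℝ)).NeBot := by
  rw [← mem_closure_iff_nhdsWithin_neBot, closure_Ioo (by norm_num : (0:ℝ) ≠ 1)]
  exact ⟨le_refl _, by norm_num⟩

lemma lfil_neBot (P : ArcParam X e) : (lfil P).NeBot :=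
  haveI := nhdsWithin_zero_neBot
  Filter.map_neBot

lemma Ioo_mem_lend {s : ℝ} (hs : 0 < s) : Set.Ioo (0:ℝ) s ∈ 𝓝[Set.Ioo (0:ℝ) 1] (0:ℝ) :=
  mem_nhdsWithin.mpr ⟨Set.Iio s, isOpen_Iio, hs, fun t ht => ⟨ht.2.1, ht.1⟩⟩

lemma clusterPt_lfil_elim {P : ArcParam X e} {p : X} (hp : ClusterPt p (lfil P))
    {U : Set X} (hU : U ∈ 𝓝 p) {s : ℝ} (hs : 0 < s) :
    ∃ t, t ∈ Set.Ioo 0 s ∧ t ∈ Set.Ioo (0:ℝ) 1 ∧ P.g t ∈ U := by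
  have h2 : Set.Ioo 0 s ∩ Set.Ioo (0:ℝ) 1 ∈ 𝓝[Set.Ioo (0:ℝ) 1] (0:ℝ) :=
    inter_mem (Ioo_mem_lend hs) self_mem_nhdsWithin
  have h3 : P.g '' (Set.Ioo 0 s ∩ Set.Ioo 0 1) ∈ lfil P := image_mem_map h2
  obtain ⟨x, hxU, t, ⟨ht1, ht2⟩, rfl⟩ := clusterPt_iff_nonempty.mp hp hU h3
  exact ⟨t, ht1, ht2, hxU⟩

lemma clusterPt_lfil_mem_closure {P : ArcParam X e} {p : X} (hp : ClusterPt p (lfil P))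
    {s : ℝ} (hs : 0 < s) : p ∈ closure (P.g '' (Set.Ioo 0 s)) := by
  rw [mem_closure_iff_nhds]
  intro U hU
  obtain ⟨t, ht, _, hgt⟩ := clusterPt_lfil_elim hp hU hs
  exact ⟨P.g t, hgt, t, ht, rfl⟩

lemma clusterPt_lfil_not_mem (P : ArcParam X e) {p : X} (hp : ClusterPt p (lfil P)) :
    p ∉ e := by
  intro hpe
  rw [← P.himage] at hpe
  obtain ⟨t₀, ht₀, rfl⟩ := hpe
  have hNo : IsOpen (P.g '' (Set.Ioo (t₀/2) 2 ∩ Set.Ioo 0 1)) := P.opn _ isOpen_Ioo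
  have hNp : P.g t₀ ∈ P.g '' (Set.Ioo (t₀/2) 2 ∩ Set.Ioo 0 1) :=
    ⟨t₀, ⟨⟨by linarith [ht₀.1], by linarith [ht₀.2]⟩, ht₀⟩, rfl⟩
  obtain ⟨t, ht, ht1, hgt⟩ := clusterPt_lfil_elim hp (hNo.mem_nhds hNp) (half_pos ht₀.1)
  obtain ⟨u, ⟨hu1, hu2⟩, hgu⟩ := hgt
  have := P.inj hu2 ht1 hgu
  have h2 := ht.2
  rw [this] at hu1
  linarith [hu1.1]

lemma clusterPt_lfil_mem_closure_e {P : ArcParam X e} {p : X} (hp : ClusterPt p (lfil P)) :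
    p ∈ closure e := by
  have := clusterPt_lfil_mem_closure hp one_pos
  rwa [P.himage] at this

variable [T2Space X] [CompactSpace X] [LocallyConnectedSpace X]

theorem clusterPt_lfil_unique (P : ArcParam X e) {p q : X}
    (hp : ClusterPt p (lfil P)) (hq : ClusterPt q (lfil P)) : p = q := by
  by_contra hpq
  have hpe := clusterPt_lfil_not_mem P hp
  obtain ⟨O₁, O₂, hO₁, hO₂, hpO₁, hqO₂, hdis⟩ := t2_separation hpq
  have hsub : O₁ ⊆ O₂ᶜ := fun x hx hx2 => disjoint_left.mp hdis hx hx2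
  have hqc : q ∉ closure O₁ := fun h => (closure_minimal hsub hO₂.isClosed_compl h) hqO₂
  obtain ⟨W, hWO₁, hWo, hpW, hWconn⟩ :=
    locallyConnectedSpace_iff_subsets_isOpen_isConnected.mp ‹_› p O₁ (hO₁.mem_nhds hpO₁)
  obtain ⟨Dc, hDc𝓝, hDccl, hDcW⟩ := exists_mem_nhds_isClosed_subset (hWo.mem_nhds hpW)
  obtain ⟨N, hNint, hNo, hpN, hNconn⟩ :=
    locallyConnectedSpace_iff_subsets_isOpen_isConnected.mp ‹_› p (interior Dc)
      (interior_mem_nhds.mpr hDc𝓝)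
  have hclNW : closure N ⊆ W := (closure_minimal (hNint.trans interior_subset) hDccl).trans hDcW
  have hNW : N ⊆ W := fun x hx => hclNW (subset_closure hx)
  have hqW : q ∉ closure W := fun h => hqc (closure_mono hWO₁ h)
  have hWc_nhds : (closure W)ᶜ ∈ 𝓝 q := (isClosed_closure.isOpen_compl).mem_nhds hqW
  obtain ⟨r_a, _, hra1, hgra⟩ := clusterPt_lfil_elim hq hWc_nhds one_pos
  obtain ⟨t₁, ht₁a, ht₁1, hgt₁⟩ := clusterPt_lfil_elim hp (hNo.mem_nhds hpN) hra1.1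
  obtain ⟨r_b, hrb, hrb1, hgrb⟩ := clusterPt_lfil_elim hq hWc_nhds ht₁a.1
  -- r_b < t₁ < r_a
  have hIccA : Set.Icc r_b t₁ ⊆ Set.Ioo (0:ℝ) 1 :=
    fun u hu => ⟨lt_of_lt_of_le hrb1.1 hu.1, lt_of_le_of_lt hu.2 ht₁1.2⟩
  have hIccB : Set.Icc t₁ r_a ⊆ Set.Ioo (0:ℝ) 1 :=
    fun u hu => ⟨lt_of_lt_of_le ht₁1.1 hu.1, lt_of_le_of_lt hu.2 hra1.2⟩
  have hAclosed : IsClosed (Set.Icc r_b t₁ ∩ P.g ⁻¹' Wᶜ) :=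
    (P.cont.mono hIccA).preimage_isClosed_of_isClosed isClosed_Icc hWo.isClosed_compl
  have hAcp : IsCompact (Set.Icc r_b t₁ ∩ P.g ⁻¹' Wᶜ) :=
    isCompact_Icc.of_isClosed_subset hAclosed inter_subset_left
  have hAne : (Set.Icc r_b t₁ ∩ P.g ⁻¹' Wᶜ).Nonempty :=
    ⟨r_b, ⟨le_refl _, hrb.2.le⟩, fun h => hgrb (subset_closure h)⟩
  have hBclosed : IsClosed (Set.Icc t₁ r_a ∩ P.g ⁻¹' Wᶜ) :=
    (P.cont.mono hIccB).preimage_isClosed_of_isClosed isClosed_Icc hWo.isClosed_compl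
  have hBcp : IsCompact (Set.Icc t₁ r_a ∩ P.g ⁻¹' Wᶜ) :=
    isCompact_Icc.of_isClosed_subset hBclosed inter_subset_left
  have hBne : (Set.Icc t₁ r_a ∩ P.g ⁻¹' Wᶜ).Nonempty :=
    ⟨r_a, ⟨ht₁a.2.le, le_refl _⟩, fun h => hgra (subset_closure h)⟩
  set α := sSup (Set.Icc r_b t₁ ∩ P.g ⁻¹' Wᶜ) with hαdef
  set β := sInf (Set.Icc t₁ r_a ∩ P.g ⁻¹' Wᶜ) with hβdef
  have hαA : α ∈ Set.Icc r_b t₁ ∩ P.g ⁻¹' Wᶜ := hAcp.sSup_mem hAne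
  have hβB : β ∈ Set.Icc t₁ r_a ∩ P.g ⁻¹' Wᶜ := hBcp.sInf_mem hBne
  have hαle : α ≤ t₁ := csSup_le hAne fun u hu => hu.1.2
  have hβge : t₁ ≤ β := le_csInf hBne fun u hu => hu.1.1
  have hαlt : α < t₁ := lt_of_le_of_ne hαle (fun h => hαA.2 (by rw [h]; exact hNW hgt₁))
  have hβgt : t₁ < β := lt_of_le_of_ne hβge (fun h => hβB.2 (by rw [← h]; exact hNW hgt₁))
  have hα0 : 0 < α := lt_of_lt_of_le hrb1.1 hαA.1.1
  have hβ1 : β < 1 := lt_of_le_of_lt hβB.1.2 hra1.2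
  have hsubIoo : Set.Ioo α β ⊆ Set.Ioo (0:ℝ) 1 :=
    fun u hu => ⟨hα0.trans hu.1, hu.2.trans hβ1⟩
  have hsubIcc : Set.Icc α β ⊆ Set.Ioo (0:ℝ) 1 :=
    fun u hu => ⟨hα0.trans_le hu.1, lt_of_le_of_lt hu.2 hβ1⟩
  have hstrand_open : IsOpen (P.g '' Set.Ioo α β) := by
    have := P.opn (Set.Ioo α β) isOpen_Ioo
    rwa [inter_eq_self_of_subset_left hsubIoo] at this
  have hK : IsCompact (P.g '' Set.Icc α β) := isCompact_Icc.image_of_continuousOn (P.cont.mono hsubIcc)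
  have hKe : P.g '' Set.Icc α β ⊆ e := by
    rintro x ⟨u, hu, rfl⟩
    have hx : P.g u ∈ P.g '' Set.Ioo 0 1 := ⟨u, hsubIcc hu, rfl⟩
    rwa [P.himage] at hx
  have hcover : N ⊆ P.g '' Set.Ioo α β ∪ (P.g '' Set.Icc α β)ᶜ := by
    intro x hxN
    by_cases hxK : x ∈ P.g '' Set.Icc α β
    · obtain ⟨u, hu, rfl⟩ := hxK
      rcases eq_or_lt_of_le hu.1 with h1 | h1
      · exact absurd (hNW hxN) (by rw [← h1]; exact hαA.2)
      rcases eq_or_lt_of_le hu.2 with h2 | h2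
      · exact absurd (hNW hxN) (by rw [h2]; exact hβB.2)
      exact Or.inl ⟨u, ⟨h1, h2⟩, rfl⟩
    · exact Or.inr hxK
  have hpK : p ∉ P.g '' Set.Icc α β := fun h => hpe (hKe h)
  obtain ⟨x, -, hx1, hx2⟩ := hNconn.isPreconnected _ _ hstrand_open hK.isClosed.isOpen_compl
    hcover ⟨P.g t₁, hgt₁, ⟨t₁, ⟨hαlt, hβgt⟩, rfl⟩⟩ ⟨p, hpN, hpK⟩
  exact hx2 (image_mono Ioo_subset_Icc_self hx1)

lemma exists_limL (P : ArcParam X e) : ∃ a, ClusterPt a (lfil P) :=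
  haveI := lfil_neBot P
  exists_clusterPt_of_compactSpace _

noncomputable def limL (P : ArcParam X e) : X := (exists_limL P).choose

lemma limL_spec (P : ArcParam X e) : ClusterPt (limL P) (lfil P) := (exists_limL P).choose_spec

lemma limL_not_mem (P : ArcParam X e) : limL P ∉ e := clusterPt_lfil_not_mem P (limL_spec P)

theorem tendsto_limL (P : ArcParam X e) :
    Tendsto P.g (𝓝[Set.Ioo (0:ℝ) 1] (0:ℝ)) (𝓝 (limL P)) := by
  by_contra h
  obtain ⟨O, hO, hpre⟩ : ∃ O ∈ 𝓝 (limL P), P.g ⁻¹' O ∉ 𝓝[Set.Ioo (0:ℝ) 1] (0:ℝ) := by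
    by_contra h'
    push_neg at h'
    exact h (tendsto_def.mpr h')
  have hO₀ : IsOpen (interior O) := isOpen_interior
  have hmemO₀ : limL P ∈ interior O := mem_interior_iff_mem_nhds.mpr hO
  have hpre₀ : P.g ⁻¹' interior O ∉ 𝓝[Set.Ioo (0:ℝ) 1] (0:ℝ) :=
    fun hmem => hpre (mem_of_superset hmem (preimage_mono interior_subset))
  haveI : (lfil P ⊓ 𝓟 (interior O)ᶜ).NeBot := by
    rw [inf_principal_neBot_iff]
    intro U hU
    by_contra hne
    rw [not_nonempty_iff_eq_empty] at hne
    have hUO : U ⊆ interior O := fun y hy => by_contra fun hy' => (eq_empty_iff_forall_notMem.mp hne y) ⟨hy, hy'⟩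
    exact hpre₀ (mem_of_superset hU (preimage_mono hUO))
  obtain ⟨c, hc⟩ := exists_clusterPt_of_compactSpace (lfil P ⊓ 𝓟 (interior O)ᶜ)
  have hc1 : ClusterPt c (lfil P) := hc.mono inf_le_left
  have hcO : c ∈ (interior O)ᶜ := by
    have h2 : ClusterPt c (𝓟 (interior O)ᶜ) := hc.mono inf_le_right
    have h3 : c ∈ closure (interior O)ᶜ := mem_closure_iff_clusterPt.mpr h2
    rwa [hO₀.isClosed_compl.closure_eq] at h3
  exact hcO (clusterPt_lfil_unique P hc1 (limL_spec P) ▸ hmemO₀)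

def ArcParam.flip (P : ArcParam X e) : ArcParam X e where
  g := fun t => P.g (1 - t)
  cont := P.cont.comp ((continuous_const.sub continuous_id).continuousOn)
    (fun t ht => ⟨by linarith [ht.2], by linarith [ht.1]⟩)
  inj := by
    intro t ht u hu h
    have h2 := P.inj (⟨by linarith [ht.2], by linarith [ht.1]⟩ : (1:ℝ) - t ∈ Set.Ioo 0 1)
      (⟨by linarith [hu.2], by linarith [hu.1]⟩ : (1:ℝ) - u ∈ Set.Ioo 0 1) h
    linarith
  himage := by
    rw [show (fun t => P.g (1 - t)) = P.g ∘ (fun t : ℝ => 1 - t) from rfl, Set.image_comp,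
      image_const_sub_Ioo]
    norm_num
    exact P.himage
  opn := by
    intro s hs
    have hinj : Function.Injective (fun t : ℝ => 1 - t) := fun x y h => by
      have h' : 1 - x = 1 - y := h
      linarith
    have h1 : (fun t => P.g (1 - t)) '' (s ∩ Set.Ioo 0 1)
        = P.g '' (((fun t : ℝ => 1 - t) '' s) ∩ Set.Ioo 0 1) := by
      rw [show (fun t => P.g (1 - t)) = P.g ∘ (fun t : ℝ => 1 - t) from rfl, Set.image_comp,
        Set.image_inter hinj, image_const_sub_Ioo]
      norm_num
    rw [h1]
    have h2 : (fun t : ℝ => 1 - t) '' s = (fun t : ℝ => 1 - t) ⁻¹' s := by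
      ext x
      constructor
      · rintro ⟨y, hy, rfl⟩; simpa using hy
      · intro hx; exact ⟨1 - x, hx, by ring⟩
    exact P.opn _ (h2 ▸ hs.preimage (continuous_const.sub continuous_id))

lemma map_reflect :
    Filter.map (fun t : ℝ => 1 - t) (𝓝[Set.Ioo (0:ℝ) 1] 1) = 𝓝[Set.Ioo (0:ℝ) 1] 0 := by
  have hmaps : MapsTo (fun t : ℝ => 1 - t) (Set.Ioo 0 1) (Set.Ioo 0 1) :=
    fun t ht => ⟨show (0:ℝ) < 1 - t by linarith [ht.2], show (1:ℝ) - t < 1 by linarith [ht.1]⟩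
  have hc : ∀ x : ℝ, ContinuousWithinAt (fun t : ℝ => 1 - t) (Set.Ioo 0 1) x :=
    fun x => (continuous_const.sub continuous_id).continuousWithinAt
  have h1 : Tendsto (fun t : ℝ => 1 - t) (𝓝[Set.Ioo (0:ℝ) 1] 1) (𝓝[Set.Ioo (0:ℝ) 1] ((1:ℝ) - 1)) :=
    (hc 1).tendsto_nhdsWithin hmaps
  have h0 : Tendsto (fun t : ℝ => 1 - t) (𝓝[Set.Ioo (0:ℝ) 1] 0) (𝓝[Set.Ioo (0:ℝ) 1] ((1:ℝ) - 0)) :=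
    (hc 0).tendsto_nhdsWithin hmaps
  rw [show (1:ℝ) - 1 = 0 by norm_num] at h1
  rw [show (1:ℝ) - 0 = 1 by norm_num] at h0
  refine le_antisymm h1 ?_
  have hid : ((fun t : ℝ => 1 - t) ∘ (fun t : ℝ => 1 - t)) = id := funext fun t => by simp
  calc 𝓝[Set.Ioo (0:ℝ) 1] 0
      = Filter.map (fun t : ℝ => 1 - t) (Filter.map (fun t : ℝ => 1 - t) (𝓝[Set.Ioo (0:ℝ) 1] 0)) := by
        rw [Filter.map_map, hid, Filter.map_id]
    _ ≤ Filter.map (fun t : ℝ => 1 - t) (𝓝[Set.Ioo (0:ℝ) 1] 1) := Filter.map_mono h0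

lemma lfil_flip (P : ArcParam X e) :
    lfil P.flip = Filter.map P.g (𝓝[Set.Ioo (0:ℝ) 1] 1) := by
  rw [lfil, ← map_reflect, Filter.map_map]
  have h1 : (P.flip.g ∘ fun t : ℝ => 1 - t) = P.g := funext fun t => by
    show P.g (1 - (1 - t)) = P.g t
    rw [sub_sub_cancel]
  rw [h1]

theorem closure_tail (P : ArcParam X e) {s : ℝ} (hs0 : 0 < s) (hs1 : s < 1) :
    closure (P.g '' (Set.Ioo 0 s)) ⊆ P.g '' (Set.Ioo 0 s) ∪ {limL P, P.g s} := by
  intro x hx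
  set Fx := 𝓝 x ⊓ 𝓟 (P.g '' (Set.Ioo 0 s)) with hFxdef
  haveI hFxne : Fx.NeBot := mem_closure_iff_clusterPt.mp hx
  set Hx := Filter.comap P.g Fx ⊓ 𝓟 (Set.Ioo 0 s) with hHxdef
  haveI : Hx.NeBot := by
    rw [← forall_mem_nonempty_iff_neBot]
    intro A hA
    rw [hHxdef, mem_inf_principal] at hA
    obtain ⟨B, hB, hBsub⟩ := Filter.mem_comap.mp hA
    rw [hFxdef, mem_inf_principal] at hB
    obtain ⟨y, hy, hyimg⟩ := mem_closure_iff_nhds.mp hx _ hB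
    obtain ⟨t, ht, rfl⟩ := hyimg
    exact ⟨t, hBsub (hy ⟨t, ht, rfl⟩) ht⟩
  have hle : Hx ≤ 𝓟 (Set.Icc 0 s) :=
    le_trans inf_le_right (principal_mono.mpr Ioo_subset_Icc_self)
  obtain ⟨t₀, ht₀, hct₀⟩ := isCompact_Icc.exists_clusterPt hle
  haveI := hct₀.neBot
  rcases eq_or_lt_of_le ht₀.1 with h0 | h0
  · -- t₀ = 0, x is a cluster point of the left end
    have h1 : Filter.map P.g (𝓝 t₀ ⊓ Hx) ≤ 𝓝 x ⊓ lfil P := by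
      refine le_inf ?_ ?_
      · exact le_trans (Filter.map_mono (le_trans inf_le_right inf_le_left))
          (le_trans Filter.map_comap_le inf_le_left)
      · refine le_trans (Filter.map_mono (show 𝓝 t₀ ⊓ Hx ≤ 𝓝[Set.Ioo (0:ℝ) 1] 0 from ?_)) le_rfl
        rw [← h0]
        exact le_inf inf_le_left (le_trans inf_le_right (le_trans inf_le_right
          (principal_mono.mpr (Set.Ioo_subset_Ioo_right hs1.le))))
    have key : ClusterPt x (lfil P) := (hct₀.neBot.map P.g).mono h1
    exact Or.inr (Or.inl (clusterPt_lfil_unique P key (limL_spec P)))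
  · have ht01 : t₀ ∈ Set.Ioo (0:ℝ) 1 := ⟨h0, lt_of_le_of_lt ht₀.2 hs1⟩
    have hcont : ContinuousAt P.g t₀ := P.cont.continuousAt (isOpen_Ioo.mem_nhds ht01)
    have hxeq : x = P.g t₀ := by
      have h1 : Filter.map P.g (𝓝 t₀ ⊓ Hx) ≤ 𝓝 (P.g t₀) ⊓ 𝓝 x :=
        le_inf (le_trans (Filter.map_mono inf_le_left) hcont)
          (le_trans (Filter.map_mono (le_trans inf_le_right inf_le_left))
            (le_trans Filter.map_comap_le inf_le_left))
      exact (eq_of_nhds_neBot ((hct₀.neBot.map P.g).mono h1)).symm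
    rcases eq_or_lt_of_le ht₀.2 with hts | hts
    · exact Or.inr (Or.inr (by rw [hxeq, hts]; rfl))
    · exact Or.inl ⟨t₀, ⟨h0, hts⟩, hxeq.symm⟩

theorem closure_e (P : ArcParam X e) :
    closure e ⊆ e ∪ {limL P, limL P.flip} := by
  intro x hx
  set Fx := 𝓝 x ⊓ 𝓟 e with hFxdef
  haveI hFxne : Fx.NeBot := mem_closure_iff_clusterPt.mp hx
  set Hx := Filter.comap P.g Fx ⊓ 𝓟 (Set.Ioo (0:ℝ) 1) with hHxdef
  haveI : Hx.NeBot := by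
    rw [← forall_mem_nonempty_iff_neBot]
    intro A hA
    rw [hHxdef, mem_inf_principal] at hA
    obtain ⟨B, hB, hBsub⟩ := Filter.mem_comap.mp hA
    rw [hFxdef, mem_inf_principal] at hB
    obtain ⟨y, hy, hyimg⟩ := mem_closure_iff_nhds.mp hx _ hB
    rw [← P.himage] at hyimg
    obtain ⟨t, ht, rfl⟩ := hyimg
    have hmem : P.g t ∈ e := by
      have h' : P.g t ∈ P.g '' Set.Ioo 0 1 := ⟨t, ht, rfl⟩
      rwa [P.himage] at h'
    exact ⟨t, hBsub (hy hmem) ht⟩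
  have hle : Hx ≤ 𝓟 (Set.Icc 0 1) :=
    le_trans inf_le_right (principal_mono.mpr Ioo_subset_Icc_self)
  obtain ⟨t₀, ht₀, hct₀⟩ := isCompact_Icc.exists_clusterPt hle
  haveI := hct₀.neBot
  rcases eq_or_lt_of_le ht₀.1 with h0 | h0
  · have h1 : Filter.map P.g (𝓝 t₀ ⊓ Hx) ≤ 𝓝 x ⊓ lfil P := by
      refine le_inf ?_ ?_
      · exact le_trans (Filter.map_mono (le_trans inf_le_right inf_le_left))
          (le_trans Filter.map_comap_le inf_le_left)
      · refine Filter.map_mono ?_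
        rw [← h0]
        exact le_inf inf_le_left (le_trans inf_le_right inf_le_right)
    have key : ClusterPt x (lfil P) := (hct₀.neBot.map P.g).mono h1
    exact Or.inr (Or.inl (clusterPt_lfil_unique P key (limL_spec P)))
  rcases eq_or_lt_of_le ht₀.2 with h1 | h1
  · -- t₀ = 1, x is cluster point of the right end
    have hmap : Filter.map P.g (𝓝 t₀ ⊓ Hx) ≤ 𝓝 x ⊓ lfil P.flip := by
      refine le_inf ?_ ?_
      · exact le_trans (Filter.map_mono (le_trans inf_le_right inf_le_left))
          (le_trans Filter.map_comap_le inf_le_left)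
      · rw [lfil_flip]
        refine Filter.map_mono ?_
        rw [h1]
        exact le_inf inf_le_left (le_trans inf_le_right inf_le_right)
    have key : ClusterPt x (lfil P.flip) := (hct₀.neBot.map P.g).mono hmap
    exact Or.inr (Or.inr (by
      have := clusterPt_lfil_unique P.flip key (limL_spec P.flip)
      simp [this]))
  · have ht01 : t₀ ∈ Set.Ioo (0:ℝ) 1 := ⟨h0, h1⟩
    have hcont : ContinuousAt P.g t₀ := P.cont.continuousAt (isOpen_Ioo.mem_nhds ht01)
    have hxeq : x = P.g t₀ := by
      have hm : Filter.map P.g (𝓝 t₀ ⊓ Hx) ≤ 𝓝 (P.g t₀) ⊓ 𝓝 x :=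
        le_inf (le_trans (Filter.map_mono inf_le_left) hcont)
          (le_trans (Filter.map_mono (le_trans inf_le_right inf_le_left))
            (le_trans Filter.map_comap_le inf_le_left))
      exact (eq_of_nhds_neBot ((hct₀.neBot.map P.g).mono hm)).symm
    left
    have h' : P.g t₀ ∈ P.g '' Set.Ioo 0 1 := ⟨t₀, ht01, rfl⟩
    rw [P.himage] at h'
    rwa [hxeq]

theorem psi_step (P : ArcParam X e) {U : Set X} (hU : U ∈ 𝓝 (limL P)) :
    ∃ S : Set X, S ∈ 𝓝[eᶜ] (limL P) ∧ IsPreconnected S ∧ S ⊆ U ∧ S ⊆ eᶜ ∧ limL P ∈ S := by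
  classical
  set a := limL P with hadef
  set b := limL P.flip with hbdef
  have hae : a ∉ e := limL_not_mem P
  have hbe : b ∉ e := limL_not_mem P.flip
  -- choose a small open set W around a, avoiding b if a ≠ b
  obtain ⟨W, hWo, haW, hWU, hWb⟩ :
      ∃ W, IsOpen W ∧ a ∈ W ∧ W ⊆ U ∧ (a ≠ b → b ∉ closure W) := by
    by_cases hab : a = b
    · exact ⟨interior U, isOpen_interior, mem_interior_iff_mem_nhds.mpr hU, interior_subset,
        fun h => absurd hab h⟩
    · obtain ⟨O₁, O₂, hO₁, hO₂, haO₁, hbO₂, hdis⟩ := t2_separation hab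
      refine ⟨interior U ∩ O₁, isOpen_interior.inter hO₁,
        ⟨mem_interior_iff_mem_nhds.mpr hU, haO₁⟩, fun x hx => interior_subset hx.1,
        fun _ hbcl => ?_⟩
      have h1 : interior U ∩ O₁ ⊆ O₂ᶜ := fun x hx hx2 => disjoint_left.mp hdis hx.2 hx2
      exact (closure_minimal h1 hO₂.isClosed_compl hbcl) hbO₂
  -- choose s₁ such that the right tail avoids `closure W` when a ≠ b
  obtain ⟨s₁, hs₁0, hs₁h, hs₁r⟩ :
      ∃ s₁ : ℝ, 0 < s₁ ∧ s₁ < 1/2 ∧ (a ≠ b → ∀ t ∈ Set.Ioo (1 - s₁) (1:ℝ), P.g t ∉ closure W) := by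
    by_cases hab : a = b
    · exact ⟨1/4, by norm_num, by norm_num, fun h => absurd hab h⟩
    · have htb : Tendsto P.g (𝓝[Set.Ioo (0:ℝ) 1] 1) (𝓝 b) := by
        have h' : lfil P.flip ≤ 𝓝 b := tendsto_limL P.flip
        rw [lfil_flip] at h'
        exact h'
      have hWb' : (closure W)ᶜ ∈ 𝓝 b := (isClosed_closure.isOpen_compl).mem_nhds (hWb hab)
      have hev := htb hWb'
      rw [Filter.mem_map, mem_nhdsWithin] at hev
      obtain ⟨u, huo, h1u, husub⟩ := hev
      obtain ⟨l, u', hlu, hsub'⟩ := mem_nhds_iff_exists_Ioo_subset.mp (huo.mem_nhds h1u)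
      refine ⟨min (1 - l) (1/4), lt_min (by linarith [hlu.1]) (by norm_num),
        lt_of_le_of_lt (min_le_right _ _) (by norm_num), fun _ t ht => ?_⟩
      have hm1 : min (1 - l) (1/4 : ℝ) ≤ 1 - l := min_le_left _ _
      have hm2 : min (1 - l) (1/4 : ℝ) ≤ 1/4 := min_le_right _ _
      have htl : l < t := by linarith [ht.1]
      have ht01 : t ∈ Set.Ioo (0:ℝ) 1 := ⟨by linarith [ht.1], ht.2⟩
      have htu : t ∈ u := hsub' ⟨htl, ht.2.trans hlu.2⟩
      exact husub ⟨htu, ht01⟩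
  have hs₁1 : s₁ < 1 := by linarith
  have hs₁' : s₁ < 1 - s₁ := by linarith
  set Tl := P.g '' (Set.Ioo 0 s₁) with hTldef
  set Tr := P.g '' (Set.Ioo (1 - s₁) 1) with hTrdef
  set M := P.g '' (Set.Icc s₁ (1 - s₁)) with hMdef
  have hIccM : Set.Icc s₁ (1 - s₁) ⊆ Set.Ioo (0:ℝ) 1 :=
    fun u hu => ⟨lt_of_lt_of_le hs₁0 hu.1, lt_of_le_of_lt hu.2 (by linarith)⟩
  have hMcp : IsCompact M := isCompact_Icc.image_of_continuousOn (P.cont.mono hIccM)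
  have hMe : M ⊆ e := by
    rintro x ⟨u, hu, rfl⟩
    have h' : P.g u ∈ P.g '' Set.Ioo 0 1 := ⟨u, hIccM hu, rfl⟩
    rwa [P.himage] at h'
  have hTle : Tl ⊆ e := by
    rintro x ⟨u, hu, rfl⟩
    have h' : P.g u ∈ P.g '' Set.Ioo 0 1 := ⟨u, ⟨hu.1, hu.2.trans hs₁1⟩, rfl⟩
    rwa [P.himage] at h'
  have hTre : Tr ⊆ e := by
    rintro x ⟨u, hu, rfl⟩
    have h' : P.g u ∈ P.g '' Set.Ioo 0 1 := ⟨u, ⟨lt_trans (by linarith) hu.1, hu.2⟩, rfl⟩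
    rwa [P.himage] at h'
  have hTlo : IsOpen Tl := by
    have := P.opn (Set.Ioo 0 s₁) isOpen_Ioo
    rwa [inter_eq_self_of_subset_left (Set.Ioo_subset_Ioo_right hs₁1.le)] at this
  have hTro : IsOpen Tr := by
    have := P.opn (Set.Ioo (1 - s₁) 1) isOpen_Ioo
    rwa [inter_eq_self_of_subset_left (Set.Ioo_subset_Ioo_left (by linarith))] at this
  have hTlTr : ∀ x, x ∈ Tl → x ∈ Tr → False := by
    rintro x ⟨t, ht, rfl⟩ ⟨u, hu, hgu⟩
    have ht1 : t ∈ Set.Ioo (0:ℝ) 1 := ⟨ht.1, ht.2.trans hs₁1⟩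
    have hu1 : u ∈ Set.Ioo (0:ℝ) 1 := ⟨lt_trans (by linarith) hu.1, hu.2⟩
    have := P.inj hu1 ht1 hgu
    rw [this] at hu
    linarith [ht.2, hu.1]
  have hclTl : closure Tl ⊆ Tl ∪ {a, P.g s₁} := closure_tail P hs₁0 hs₁1
  have hclTr : closure Tr ⊆ Tr ∪ {b, P.g (1 - s₁)} := by
    have h1 := closure_tail P.flip hs₁0 hs₁1
    have h2 : P.flip.g '' (Set.Ioo 0 s₁) = Tr := by
      show (fun t => P.g (1 - t)) '' Set.Ioo 0 s₁ = Tr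
      rw [show (fun t => P.g (1 - t)) = P.g ∘ (fun t : ℝ => 1 - t) from rfl, Set.image_comp,
        image_const_sub_Ioo]
      rw [hTrdef, sub_zero]
    rw [h2] at h1
    exact h1
  set G := W \ M with hGdef
  have hGo : IsOpen G := hWo.sdiff hMcp.isClosed
  have haG : a ∈ G := ⟨haW, fun h => hae (hMe h)⟩
  obtain ⟨V, hVG, hVo, haV, hVconn⟩ :=
    locallyConnectedSpace_iff_subsets_isOpen_isConnected.mp ‹_› a G (hGo.mem_nhds haG)
  set Ga := connectedComponentIn G a with hGadef
  have hGaconn : IsConnected Ga := isConnected_connectedComponentIn_iff.mpr haG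
  have hVGa : V ⊆ Ga := hVconn.isPreconnected.subset_connectedComponentIn haV hVG
  have hGaG : Ga ⊆ G := connectedComponentIn_subset _ _
  set ψ : X → X := fun x => if x ∈ Tl then a else if x ∈ Tr then b else x with hψdef
  have hψTl : ∀ x ∈ Tl, ψ x = a := fun x hx => if_pos hx
  have hψTr : ∀ x ∈ Tr, ψ x = b := by
    intro x hx
    show (if x ∈ Tl then a else if x ∈ Tr then b else x) = b
    rw [if_neg (fun h => hTlTr x h hx), if_pos hx]
  have hψid : ∀ x, x ∉ Tl → x ∉ Tr → ψ x = x := by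
    intro x h1 h2
    show (if x ∈ Tl then a else if x ∈ Tr then b else x) = x
    rw [if_neg h1, if_neg h2]
  have hgsM : P.g s₁ ∈ M := ⟨s₁, ⟨le_refl _, hs₁'.le⟩, rfl⟩
  have hgs'M : P.g (1 - s₁) ∈ M := ⟨1 - s₁, ⟨hs₁'.le, le_refl _⟩, rfl⟩
  -- continuity of ψ on Mᶜ
  have hcont : ContinuousOn ψ Mᶜ := by
    intro x hxM
    refine tendsto_def.mpr fun s hs => ?_
    by_cases hxl : x ∈ Tl
    · have has : a ∈ s := by rw [← hψTl x hxl]; exact mem_of_mem_nhds hs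
      exact mem_nhdsWithin.mpr ⟨Tl, hTlo, hxl, fun y hy =>
        show ψ y ∈ s by rw [hψTl y hy.1]; exact has⟩
    by_cases hxr : x ∈ Tr
    · have hbs : b ∈ s := by rw [← hψTr x hxr]; exact mem_of_mem_nhds hs
      exact mem_nhdsWithin.mpr ⟨Tr, hTro, hxr, fun y hy =>
        show ψ y ∈ s by rw [hψTr y hy.1]; exact hbs⟩
    rw [hψid x hxl hxr] at hs
    have hxOo : x ∈ interior s := mem_interior_iff_mem_nhds.mpr hs
    set Oo := interior s with hOodef
    have hOos : Oo ⊆ s := interior_subset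
    have hOoo : IsOpen Oo := isOpen_interior
    by_cases haO : a ∈ Oo <;> by_cases hbO : b ∈ Oo
    · -- both endpoints in Oo
      refine mem_nhdsWithin.mpr ⟨Oo ∪ Tl ∪ Tr, (hOoo.union hTlo).union hTro,
        Or.inl (Or.inl hxOo), fun y hy => ?_⟩
      show ψ y ∈ s
      by_cases h1 : y ∈ Tl
      · rw [hψTl y h1]; exact hOos haO
      by_cases h2 : y ∈ Tr
      · rw [hψTr y h2]; exact hOos hbO
      rw [hψid y h1 h2]
      rcases hy.1 with (h | h) | h
      · exact hOos h
      · exact absurd h h1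
      · exact absurd h h2
    · -- a ∈ Oo, b ∉ Oo
      have hxTr : x ∉ closure Tr := by
        intro hcl
        rcases hclTr hcl with h | h
        · exact hxr h
        rcases h with h | h
        · rw [h] at hxOo; exact hbO hxOo
        · rw [mem_singleton_iff] at h; rw [h] at hxM; exact hxM hgs'M
      refine mem_nhdsWithin.mpr ⟨(Oo \ closure Tr) ∪ Tl,
        (hOoo.sdiff isClosed_closure).union hTlo, Or.inl ⟨hxOo, hxTr⟩, fun y hy => ?_⟩
      show ψ y ∈ s
      by_cases h1 : y ∈ Tl
      · rw [hψTl y h1]; exact hOos haO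
      by_cases h2 : y ∈ Tr
      · exfalso
        rcases hy.1 with h | h
        · exact h.2 (subset_closure h2)
        · exact h1 h
      rw [hψid y h1 h2]
      rcases hy.1 with h | h
      · exact hOos h.1
      · exact absurd h h1
    · -- a ∉ Oo, b ∈ Oo
      have hxTl : x ∉ closure Tl := by
        intro hcl
        rcases hclTl hcl with h | h
        · exact hxl h
        rcases h with h | h
        · rw [h] at hxOo; exact haO hxOo
        · rw [mem_singleton_iff] at h; rw [h] at hxM; exact hxM hgsM
      refine mem_nhdsWithin.mpr ⟨(Oo \ closure Tl) ∪ Tr,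
        (hOoo.sdiff isClosed_closure).union hTro, Or.inl ⟨hxOo, hxTl⟩, fun y hy => ?_⟩
      show ψ y ∈ s
      by_cases h2 : y ∈ Tr
      · rw [hψTr y h2]; exact hOos hbO
      by_cases h1 : y ∈ Tl
      · exfalso
        rcases hy.1 with h | h
        · exact h.2 (subset_closure h1)
        · exact h2 h
      rw [hψid y h1 h2]
      rcases hy.1 with h | h
      · exact hOos h.1
      · exact absurd h h2
    · -- neither endpoint in Oo
      have hxTl : x ∉ closure Tl := by
        intro hcl
        rcases hclTl hcl with h | h
        · exact hxl h
        rcases h with h | h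
        · rw [h] at hxOo; exact haO hxOo
        · rw [mem_singleton_iff] at h; rw [h] at hxM; exact hxM hgsM
      have hxTr : x ∉ closure Tr := by
        intro hcl
        rcases hclTr hcl with h | h
        · exact hxr h
        rcases h with h | h
        · rw [h] at hxOo; exact hbO hxOo
        · rw [mem_singleton_iff] at h; rw [h] at hxM; exact hxM hgs'M
      refine mem_nhdsWithin.mpr ⟨Oo \ (closure Tl ∪ closure Tr),
        hOoo.sdiff (isClosed_closure.union isClosed_closure), ⟨hxOo, fun h => h.elim hxTl hxTr⟩,
        fun y hy => ?_⟩
      show ψ y ∈ s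
      have h1 : y ∉ Tl := fun h => hy.1.2 (Or.inl (subset_closure h))
      have h2 : y ∉ Tr := fun h => hy.1.2 (Or.inr (subset_closure h))
      rw [hψid y h1 h2]
      exact hOos hy.1.1
  -- assemble
  set S := ψ '' Ga with hSdef
  have hGaM : Ga ⊆ Mᶜ := fun y hy => (hGaG hy).2
  have hSconn : IsPreconnected S := hGaconn.isPreconnected.image ψ (hcont.mono hGaM)
  have haTl : a ∉ Tl := fun h => hae (hTle h)
  have haTr : a ∉ Tr := fun h => hae (hTre h)
  have haS : a ∈ S := ⟨a, mem_connectedComponentIn haG, hψid a haTl haTr⟩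
  have hSY : S ⊆ eᶜ := by
    rintro _ ⟨y, hyGa, rfl⟩
    by_cases h1 : y ∈ Tl
    · rw [hψTl y h1]; exact hae
    by_cases h2 : y ∈ Tr
    · rw [hψTr y h2]; exact hbe
    rw [hψid y h1 h2]
    intro hye
    rw [← P.himage] at hye
    obtain ⟨t, ht, rfl⟩ := hye
    rcases lt_or_ge t s₁ with h | h
    · exact h1 ⟨t, ⟨ht.1, h⟩, rfl⟩
    rcases le_or_gt t (1 - s₁) with h' | h'
    · exact (hGaM hyGa) ⟨t, ⟨h, h'⟩, rfl⟩
    · exact h2 ⟨t, ⟨h', ht.2⟩, rfl⟩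
  have hSU : S ⊆ U := by
    rintro _ ⟨y, hyGa, rfl⟩
    by_cases h1 : y ∈ Tl
    · rw [hψTl y h1]; exact hWU haW
    by_cases h2 : y ∈ Tr
    · by_cases hab : a = b
      · rw [hψTr y h2, ← hab]; exact hWU haW
      · exfalso
        obtain ⟨t, ht, rfl⟩ := h2
        exact hs₁r hab t ht (subset_closure (hGaG hyGa).1)
    · rw [hψid y h1 h2]; exact hWU (hGaG hyGa).1
  have hSnb : S ∈ 𝓝[eᶜ] a := mem_nhdsWithin.mpr ⟨V, hVo, haV, fun y hy =>
    ⟨y, hVGa hy.1, hψid y (fun h => hy.2 (hTle h)) (fun h => hy.2 (hTre h))⟩⟩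
  exact ⟨S, hSnb, hSconn, hSU, hSY, haS⟩

theorem locallyConnected_of_rel {C : Set X}
    (H : ∀ z ∈ C, ∀ U ∈ 𝓝 z, ∃ S : Set X, S ∈ 𝓝[C] z ∧ IsPreconnected S ∧ S ⊆ U ∧ S ⊆ C) :
    LocallyConnectedSpace ↥C := by
  rw [locallyConnectedSpace_iff_connected_subsets]
  rintro ⟨z, hz⟩ U' hU'
  have h1 : Subtype.val '' U' ∈ 𝓝[C] z := by
    rw [← map_nhds_subtype_val (⟨z, hz⟩ : C)]
    exact image_mem_map hU'
  rw [mem_nhdsWithin] at h1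
  obtain ⟨O, hOo, hzO, hOsub⟩ := h1
  obtain ⟨S, hS1, hS2, hS3, hS4⟩ := H z hz O (hOo.mem_nhds hzO)
  refine ⟨Subtype.val ⁻¹' S, ?_, ?_, ?_⟩
  · have h2 : S ∈ Filter.map Subtype.val (𝓝 (⟨z, hz⟩ : C)) := by
      rw [map_nhds_subtype_val]; exact hS1
    exact Filter.mem_map.mp h2
  · have himg : Subtype.val '' (Subtype.val ⁻¹' S : Set ↥C) = S := by
      rw [Subtype.image_preimage_coe]
      exact inter_eq_self_of_subset_right hS4
    apply IsInducing.subtypeVal.isPreconnected_image.mp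
    rw [himg]
    exact hS2
  · intro y hy
    have h3 : (y : X) ∈ Subtype.val '' U' := hOsub ⟨hS3 hy, hS4 hy⟩
    obtain ⟨u, huU, hu⟩ := h3
    rwa [← Subtype.coe_injective hu]

theorem mem_endpoint_of_component [ConnectedSpace X] (heo : IsOpen e) {a b : X}
    (ha : a ∉ e) (hb : b ∉ e) (hcl : closure e ⊆ e ∪ {a, b}) {x : X} (hx : x ∈ eᶜ) :
    a ∈ connectedComponentIn eᶜ x ∨ b ∈ connectedComponentIn eᶜ x := by
  by_contra hcon
  push_neg at hcon
  obtain ⟨hna, hnb⟩ := hcon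
  haveI : CompactSpace ↥(eᶜ) := isCompact_iff_compactSpace.mp heo.isClosed_compl.isCompact
  rw [connectedComponentIn_eq_image hx] at hna hnb
  have hna' : (⟨a, ha⟩ : ↥(eᶜ)) ∉ connectedComponent (⟨x, hx⟩ : ↥(eᶜ)) :=
    fun h' => hna ⟨_, h', rfl⟩
  have hnb' : (⟨b, hb⟩ : ↥(eᶜ)) ∉ connectedComponent (⟨x, hx⟩ : ↥(eᶜ)) :=
    fun h' => hnb ⟨_, h', rfl⟩
  rw [connectedComponent_eq_iInter_isClopen] at hna' hnb'
  simp only [mem_iInter, not_forall] at hna' hnb'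
  obtain ⟨s₁, hs₁⟩ := hna'
  obtain ⟨s₂, hs₂⟩ := hnb'
  set Z := (s₁ : Set ↥(eᶜ)) ∩ (s₂ : Set ↥(eᶜ)) with hZdef
  have hZcl : IsClopen Z := s₁.2.1.inter s₂.2.1
  have hZx : (⟨x, hx⟩ : ↥(eᶜ)) ∈ Z := ⟨s₁.2.2, s₂.2.2⟩
  have haZ : (⟨a, ha⟩ : ↥(eᶜ)) ∉ Z := fun h => hs₁ h.1
  have hbZ : (⟨b, hb⟩ : ↥(eᶜ)) ∉ Z := fun h => hs₂ h.2
  set S := Subtype.val '' Z with hSdef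
  have hScl : IsClosed S := (hZcl.isClosed.isCompact.image continuous_subtype_val).isClosed
  obtain ⟨O, hOo, hOpre⟩ := isOpen_induced_iff.mp hZcl.isOpen
  have hSO : S = eᶜ ∩ O := by rw [hSdef, ← hOpre, Subtype.image_preimage_coe]
  have hSe : ∀ y ∈ S, y ∉ closure e := by
    intro y hyS hycl
    have hyc : y ∈ eᶜ := (hSO ▸ hyS).1
    rcases hcl hycl with h | h
    · exact hyc h
    rcases h with h | h
    · obtain ⟨u, huZ, hu⟩ := hyS
      have hu' : u = ⟨a, ha⟩ := Subtype.ext (by rw [hu, h])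
      exact haZ (hu' ▸ huZ)
    · rw [mem_singleton_iff] at h
      obtain ⟨u, huZ, hu⟩ := hyS
      have hu' : u = ⟨b, hb⟩ := Subtype.ext (by rw [hu, h])
      exact hbZ (hu' ▸ huZ)
  have hSopen : IsOpen S := by
    have heq : S = O ∩ (closure e)ᶜ := by
      apply Subset.antisymm
      · intro y hy
        exact ⟨(hSO ▸ hy).2, hSe y hy⟩
      · intro y hy
        rw [hSO]
        exact ⟨fun h' => hy.2 (subset_closure h'), hy.1⟩
    rw [heq]
    exact hOo.inter isClosed_closure.isOpen_compl
  rcases isClopen_iff.mp ⟨hScl, hSopen⟩ with h | h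
  · have hxS : x ∈ S := ⟨⟨x, hx⟩, hZx, rfl⟩
    rw [h] at hxS
    exact hxS
  · have haS : a ∈ S := h ▸ mem_univ a
    obtain ⟨u, huZ, hu⟩ := haS
    have hu' : u = ⟨a, ha⟩ := Subtype.ext hu
    exact haZ (hu' ▸ huZ)

theorem exists_arcParam {Y : Type*} [TopologicalSpace Y] {E : Set Y} (heo : IsOpen E)
    (hne : Nonempty (↥E ≃ₜ ↥(Set.Ioo (0:ℝ) 1))) : Nonempty (ArcParam Y E) := by
  obtain ⟨h⟩ := hne
  classical
  refine ⟨⟨fun t => if ht : t ∈ Set.Ioo (0:ℝ) 1 then ((h.symm ⟨t, ht⟩ : ↥E) : Y)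
    else ((h.symm ⟨1/2, by norm_num⟩ : ↥E) : Y), ?_, ?_, ?_, ?_⟩⟩
  · rw [continuousOn_iff_continuous_restrict]
    have hres : (Set.Ioo (0:ℝ) 1).domRestrict (fun t => if ht : t ∈ Set.Ioo (0:ℝ) 1
        then ((h.symm ⟨t, ht⟩ : ↥E) : Y) else ((h.symm ⟨1/2, by norm_num⟩ : ↥E) : Y))
        = fun t : ↥(Set.Ioo (0:ℝ) 1) => ((h.symm t : ↥E) : Y) := by
      funext t
      simp only [Set.domRestrict_apply, dif_pos t.2]
    rw [hres]
    exact continuous_subtype_val.comp (h.symm.continuous)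
  · intro t ht u hu htu
    simp only [dif_pos ht, dif_pos hu] at htu
    have h1 : h.symm ⟨t, ht⟩ = h.symm ⟨u, hu⟩ := Subtype.coe_injective htu
    have h2 : (⟨t, ht⟩ : ↥(Set.Ioo (0:ℝ) 1)) = ⟨u, hu⟩ := h.symm.injective h1
    exact congrArg Subtype.val h2
  · ext x
    constructor
    · rintro ⟨t, ht, rfl⟩
      simp only [dif_pos ht]
      exact (h.symm ⟨t, ht⟩).2
    · intro hx
      refine ⟨(h ⟨x, hx⟩ : ↥(Set.Ioo (0:ℝ) 1)), (h ⟨x, hx⟩).2, ?_⟩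
      simp only [dif_pos (h ⟨x, hx⟩).2]
      have heta : (⟨((h ⟨x, hx⟩ : ↥(Set.Ioo (0:ℝ) 1)) : ℝ), (h ⟨x, hx⟩).2⟩ : ↥(Set.Ioo (0:ℝ) 1))
          = h ⟨x, hx⟩ := rfl
      rw [heta, h.symm_apply_apply]
  · intro s hs
    have heq : (fun t => if ht : t ∈ Set.Ioo (0:ℝ) 1 then ((h.symm ⟨t, ht⟩ : ↥E) : Y)
        else ((h.symm ⟨1/2, by norm_num⟩ : ↥E) : Y)) '' (s ∩ Set.Ioo 0 1)
        = Subtype.val '' (h ⁻¹' (Subtype.val ⁻¹' s)) := by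
      ext z
      constructor
      · rintro ⟨t, ⟨hts, ht⟩, rfl⟩
        simp only [dif_pos ht]
        refine ⟨h.symm ⟨t, ht⟩, ?_, rfl⟩
        show ((h (h.symm ⟨t, ht⟩) : ↥(Set.Ioo (0:ℝ) 1)) : ℝ) ∈ s
        rw [h.apply_symm_apply]
        exact hts
      · rintro ⟨y, hy, rfl⟩
        have hy' : ((h y : ↥(Set.Ioo (0:ℝ) 1)) : ℝ) ∈ s := hy
        refine ⟨((h y : ↥(Set.Ioo (0:ℝ) 1)) : ℝ), ⟨hy', (h y).2⟩, ?_⟩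
        simp only [dif_pos (h y).2]
        have heta : (⟨((h y : ↥(Set.Ioo (0:ℝ) 1)) : ℝ), (h y).2⟩ : ↥(Set.Ioo (0:ℝ) 1)) = h y := rfl
        rw [heta, h.symm_apply_apply]
    rw [heq]
    exact heo.isOpenMap_subtype_val _
      ((hs.preimage continuous_subtype_val).preimage h.continuous)

end Stmt6Aux

section Stmt6Main

open Stmt6Aux

variable {X : Type*} [TopologicalSpace X] [CompactSpace X] [ConnectedSpace X]
    [LocallyConnectedSpace X] [TopologicalSpace.MetrizableSpace X]

theorem stmt_6_aux (e : Set X)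
    (heo : IsOpen e) (hnon : Nonempty (↥e ≃ₜ ↥(Set.Ioo (0:ℝ) 1))) :
    (∃ C D : Set X, ∀ x ∈ eᶜ, connectedComponentIn eᶜ x = C ∨ connectedComponentIn eᶜ x = D) ∧
      ∀ x ∈ eᶜ, (connectedComponentIn eᶜ x).Nonempty ∧
        IsCompact (connectedComponentIn eᶜ x) ∧
        IsConnected (connectedComponentIn eᶜ x) ∧
        LocallyConnectedSpace ↥(connectedComponentIn eᶜ x) := by
  obtain ⟨P⟩ := exists_arcParam heo hnon
  have hae : limL P ∉ e := limL_not_mem P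
  have hbe : limL P.flip ∉ e := limL_not_mem P.flip
  have hcl : closure e ⊆ e ∪ {limL P, limL P.flip} := closure_e P
  constructor
  · refine ⟨connectedComponentIn eᶜ (limL P), connectedComponentIn eᶜ (limL P.flip),
      fun x hx => ?_⟩
    rcases mem_endpoint_of_component heo hae hbe hcl hx with h | h
    · exact Or.inl (connectedComponentIn_eq h)
    · exact Or.inr (connectedComponentIn_eq h)
  · intro x hx
    refine ⟨⟨x, mem_connectedComponentIn hx⟩, ?_, isConnected_connectedComponentIn_iff.mpr hx, ?_⟩
    · haveI : CompactSpace ↥(eᶜ) := isCompact_iff_compactSpace.mp heo.isClosed_compl.isCompact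
      rw [connectedComponentIn_eq_image hx]
      exact isClosed_connectedComponent.isCompact.image continuous_subtype_val
    · apply locallyConnected_of_rel
      intro z hz U hU
      have hzc : z ∈ eᶜ := connectedComponentIn_subset _ _ hz
      have hCC : connectedComponentIn eᶜ x = connectedComponentIn eᶜ z := connectedComponentIn_eq hz
      by_cases hzcl : z ∈ closure e
      · have hz_ab : z = limL P ∨ z = limL P.flip := by
          rcases hcl hzcl with h | h
          · exact absurd h hzc
          rcases h with h | h
          · exact Or.inl h
          · exact Or.inr (mem_singleton_iff.mp h)
        have key : ∃ S : Set X, S ∈ 𝓝[eᶜ] z ∧ IsPreconnected S ∧ S ⊆ U ∧ S ⊆ eᶜ ∧ z ∈ S := by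
          rcases hz_ab with rfl | rfl
          · exact psi_step P hU
          · exact psi_step P.flip hU
        obtain ⟨S, h1, h2, h3, h4, h5⟩ := key
        refine ⟨S, ?_, h2, h3, ?_⟩
        · exact Filter.le_def.mp (nhdsWithin_mono z (connectedComponentIn_subset _ _)) S h1
        · rw [hCC]
          exact h2.subset_connectedComponentIn h5 h4
      · obtain ⟨V, hVsub, hVo, hzV, hVconn⟩ :=
          locallyConnectedSpace_iff_subsets_isOpen_isConnected.mp ‹_› z (U ∩ (closure e)ᶜ)
            (inter_mem hU ((isClosed_closure.isOpen_compl).mem_nhds hzcl))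
        refine ⟨V, mem_nhdsWithin_of_mem_nhds (hVo.mem_nhds hzV), hVconn.isPreconnected,
          fun y hy => (hVsub hy).1, ?_⟩
        rw [hCC]
        exact hVconn.isPreconnected.subset_connectedComponentIn hzV
          (fun y hy hye => (hVsub hy).2 (subset_closure hye))

end Stmt6Main


/-- Removing a free arc from a Peano continuum leaves at most two
connected components, each of which is again a Peano continuum. -/
theorem stmt_6 {X : Type*} [TopologicalSpace X] [CompactSpace X] [ConnectedSpace X]
    [LocallyConnectedSpace X] [TopologicalSpace.MetrizableSpace X] [Nonempty X]
    (e : Set X) (he : IsFreeArc e) :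
    (∃ C D : Set X, ∀ x ∈ eᶜ, connectedComponentIn eᶜ x = C ∨ connectedComponentIn eᶜ x = D) ∧
      ∀ x ∈ eᶜ, (connectedComponentIn eᶜ x).Nonempty ∧
        IsCompact (connectedComponentIn eᶜ x) ∧
        IsConnected (connectedComponentIn eᶜ x) ∧
        LocallyConnectedSpace ↥(connectedComponentIn eᶜ x) := by
  obtain ⟨heo, hnon, -⟩ := he
  exact stmt_6_aux e heo hnon
end
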